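/- arXiv:2102.03838 — 6 statements merged into one kernel-verified Lean document; each statement's English description precedes it below -/
import Mathlib

section
/- A Banach space X is Grothendieck if and only if every bounded linear operator T : X → c₀ is weakly compact. -/
open Filter Topology ZeroAtInfty

/-- A sequence in the dual of `X` converges in the weak* topology. -/
def WeakStarConv (X : Type*) [SeminormedAddCommGroup X] [NormedSpace ℝ X]
    (f : ℕ → X →L[ℝ] ℝ) (g : X →L[ℝ] ℝ) : Prop :=
  ∀ x : X, Tendsto (fun n => f n x) atTop (𝓝 (g x))

/-- A sequence in a normed space `Z` converges in the weak topology. -/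
def WeakConv (Z : Type*) [SeminormedAddCommGroup Z] [NormedSpace ℝ Z]
    (f : ℕ → Z) (g : Z) : Prop :=
  ∀ φ : Z →L[ℝ] ℝ, Tendsto (fun n => φ (f n)) atTop (𝓝 (φ g))

/-- A Banach space is Grothendieck if weak*-convergent sequences in its dual converge weakly. -/
def IsGrothendieck (X : Type*) [SeminormedAddCommGroup X] [NormedSpace ℝ X] : Prop :=
  ∀ (f : ℕ → X →L[ℝ] ℝ) (g : X →L[ℝ] ℝ),
    WeakStarConv X f g → WeakConv (X →L[ℝ] ℝ) f g

/-- The weak topology of a normed space. -/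
def weakTopology (Y : Type*) [SeminormedAddCommGroup Y] [NormedSpace ℝ Y] :
    TopologicalSpace Y :=
  TopologicalSpace.induced (fun (y : Y) => fun f : Y →L[ℝ] ℝ => f y) Pi.topologicalSpace

/-- An operator is weakly compact if the image of the closed unit ball is
relatively compact in the weak topology. -/
def IsWeaklyCompactOp {X Y : Type*} [SeminormedAddCommGroup X] [NormedSpace ℝ X]
    [SeminormedAddCommGroup Y] [NormedSpace ℝ Y] (T : X →L[ℝ] Y) : Prop :=
  @IsCompact Y (weakTopology Y) (@closure Y (weakTopology Y) (⇑T '' Metric.closedBall 0 1))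

/-!
A functional on `c₀` is determined by its values on the unit vectors, which form an `ℓ¹` sequence;
hence on bounded subsets of `c₀` the weak topology is the topology of coordinatewise convergence,
and a bounded set `A ⊆ c₀` is relatively weakly compact iff every coordinatewise limit of elements
of `A` is again a null sequence. For `T : X → c₀` with coordinate functionals `gₙ = eₙ ∘ T`,
Banach–Alaoglu and Goldstine identify the coordinatewise closure of `T(B_X)` with
`{(φ gₙ)ₙ : φ ∈ B_{X**}}`, so `T` is weakly compact iff `(gₙ)` is weakly null in `X*`. Finally, by
uniform boundedness every weak*-null sequence in `X*` arises as `(eₙ ∘ T)` for some `T : X → c₀`.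
-/

namespace ZeroAtInftyContinuousMap

section Norm

variable {α β : Type*} [TopologicalSpace α] [SeminormedAddCommGroup β]

theorem norm_le {f : C₀(α, β)} {c : ℝ} (hc : 0 ≤ c) : ‖f‖ ≤ c ↔ ∀ x, ‖f x‖ ≤ c := by
  rw [← norm_toBCF_eq_norm, BoundedContinuousFunction.norm_le hc]
  rfl

theorem norm_apply_le (f : C₀(α, β)) (x : α) : ‖f x‖ ≤ ‖f‖ :=
  (norm_le (norm_nonneg f)).1 le_rfl x

variable [NormedSpace ℝ β]

noncomputable def evalCLM (x : α) : C₀(α, β) →L[ℝ] β :=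
  LinearMap.mkContinuous
    { toFun := fun f => f x
      map_add' := fun _ _ => rfl
      map_smul' := fun _ _ => rfl } 1
    fun f => by simpa using norm_apply_le f x

@[simp]
theorem evalCLM_apply (x : α) (f : C₀(α, β)) : evalCLM x f = f x :=
  rfl

end Norm

theorem tendsto_atTop_zero {β : Type*} [TopologicalSpace β] [Zero β] (f : C₀(ℕ, β)) :
    Tendsto f atTop (𝓝 0) := by
  simpa only [cocompact_eq_atTop] using zero_at_infty f

def ofTendsto {β : Type*} [TopologicalSpace β] [Zero β] (v : ℕ → β)
    (hv : Tendsto v atTop (𝓝 0)) : C₀(ℕ, β) :=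
  ⟨⟨v, continuous_of_discreteTopology⟩, by rwa [cocompact_eq_atTop]⟩

def single (k : ℕ) : C₀(ℕ, ℝ) :=
  ofTendsto (Pi.single k 1) <| tendsto_nhds_of_eventually_eq <|
    (eventually_gt_atTop k).mono fun _ hn => Pi.single_eq_of_ne hn.ne' _

theorem single_apply (k n : ℕ) : single k n = (Pi.single k 1 : ℕ → ℝ) n :=
  rfl

theorem sum_smul_single_apply (s : Finset ℕ) (c : ℕ → ℝ) (n : ℕ) :
    (∑ k ∈ s, c k • single k) n = if n ∈ s then c n else 0 := by
  rw [← evalCLM_apply, map_sum]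
  simp [single_apply, Pi.single_apply]

theorem hasSum_smul_single (z : C₀(ℕ, ℝ)) : HasSum (fun k => z k • single k) z := by
  rw [HasSum, Metric.tendsto_nhds]
  intro ε hε
  obtain ⟨N, hN⟩ := Metric.tendsto_atTop.1 (tendsto_atTop_zero z) (ε / 2) (half_pos hε)
  filter_upwards [eventually_ge_atTop (Finset.range N)] with s hs
  rw [dist_eq_norm]
  refine lt_of_le_of_lt ((norm_le (half_pos hε).le).2 fun n => ?_) (half_lt_self hε)
  rw [ZeroAtInftyContinuousMap.sub_apply, sum_smul_single_apply]
  split_ifs with hn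
  · simpa using (half_pos hε).le
  · have : N ≤ n := by simpa using mt (@hs n) hn
    simpa using (hN n this).le

theorem sum_abs_apply_single_le (φ : C₀(ℕ, ℝ) →L[ℝ] ℝ) (s : Finset ℕ) :
    ∑ k ∈ s, |φ (single k)| ≤ ‖φ‖ := by
  set w := ∑ k ∈ s, (SignType.sign (φ (single k)) : ℝ) • single k
  have hw : ‖w‖ ≤ 1 := by
    refine (norm_le zero_le_one).2 fun n => ?_
    rw [sum_smul_single_apply]
    split_ifs
    · cases SignType.sign (φ (single n)) <;> simp
    · simp
  calc ∑ k ∈ s, |φ (single k)| = φ w := by simp [w, map_sum, sign_mul_self]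
    _ ≤ ‖φ‖ * ‖w‖ := (le_abs_self _).trans (φ.le_opNorm w)
    _ ≤ ‖φ‖ := mul_le_of_le_one_right (norm_nonneg φ) hw

theorem summable_abs_apply_single (φ : C₀(ℕ, ℝ) →L[ℝ] ℝ) :
    Summable fun k => |φ (single k)| :=
  summable_of_sum_le (fun _ => abs_nonneg _) (sum_abs_apply_single_le φ)

theorem hasSum_apply_single_mul (φ : C₀(ℕ, ℝ) →L[ℝ] ℝ) (z : C₀(ℕ, ℝ)) :
    HasSum (fun k => φ (single k) * z k) (φ z) := by
  simpa [mul_comm] using (hasSum_smul_single z).mapL φ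

theorem continuous_coe_weakTopology {α : Type*} [TopologicalSpace α] :
    Continuous[weakTopology C₀(α, ℝ), _] ((⇑) : C₀(α, ℝ) → α → ℝ) := by
  have h := @continuous_induced_dom _ _ (fun z (φ : C₀(α, ℝ) →L[ℝ] ℝ) => φ z) Pi.topologicalSpace
  exact @continuous_pi _ _ _ (weakTopology _) _ _ fun x =>
    @Continuous.comp _ _ _ (weakTopology _) _ _ _ _ (continuous_apply (evalCLM x)) h

-- On `K` the weak topology is the product topology: `φ z = ∑ₖ φ (single k) * z k` with
-- `(φ (single k))ₖ ∈ ℓ¹`, and this series converges uniformly on the bounded set `K`.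
theorem isCompact_weakTopology_preimage_coe {K : Set (ℕ → ℝ)} (hK : IsCompact K) {M : ℝ}
    (hKM : K ⊆ Set.univ.pi fun _ => Metric.closedBall 0 M)
    (hK₀ : ∀ y ∈ K, Tendsto y atTop (𝓝 0)) :
    @IsCompact _ (weakTopology _) ((⇑) ⁻¹' K : Set C₀(ℕ, ℝ)) := by
  have : CompactSpace K := isCompact_iff_compactSpace.1 hK
  let lift : K → C₀(ℕ, ℝ) := fun y => ofTendsto y (hK₀ y y.2)
  have hlift : Continuous[_, weakTopology _] lift := by
    refine continuous_induced_rng.2 (continuous_pi fun φ => ?_)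
    have hφ : ∀ y : K, φ (lift y) = ∑' k, φ (single k) * (y : ℕ → ℝ) k := fun y =>
      (hasSum_apply_single_mul φ (lift y)).tsum_eq.symm
    simp only [Function.comp_def, hφ]
    refine continuous_tsum (fun k => continuous_const.mul ((continuous_apply k).comp
      continuous_subtype_val)) ((summable_abs_apply_single φ).mul_right M) fun k y => ?_
    rw [norm_mul, Real.norm_eq_abs]
    gcongr
    simpa using hKM y.2 k (Set.mem_univ k)
  have hrange : Set.range lift = (⇑) ⁻¹' K := by
    ext z
    refine ⟨?_, fun hz => ⟨⟨z, hz⟩, rfl⟩⟩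
    rintro ⟨y, rfl⟩
    exact y.2
  rw [← hrange]
  exact @isCompact_range _ _ _ (weakTopology _) _ _ hlift

theorem isCompact_weakTopology_closure_iff {A : Set C₀(ℕ, ℝ)} (hA : Bornology.IsBounded A) :
    @IsCompact _ (weakTopology _) (closure[weakTopology _] A) ↔
      ∀ y ∈ closure ((⇑) '' A), Tendsto y atTop (𝓝 0) := by
  constructor
  · intro hcpt y hy
    have hK := @IsCompact.image _ _ (weakTopology _) _ _ _ hcpt continuous_coe_weakTopology
    obtain ⟨z, -, rfl⟩ := closure_minimal
      (Set.image_mono (@subset_closure _ (weakTopology _) A)) hK.isClosed hy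
    exact tendsto_atTop_zero z
  · intro h
    obtain ⟨M, hM⟩ := hA.exists_norm_le
    have hbox : closure ((⇑) '' A) ⊆ Set.univ.pi fun _ => Metric.closedBall (0 : ℝ) M := by
      refine closure_minimal ?_ (isClosed_set_pi fun _ _ => Metric.isClosed_closedBall)
      rintro _ ⟨z, hz, rfl⟩ k -
      simpa using (norm_apply_le z k).trans (hM z hz)
    have hK := (isCompact_univ_pi fun _ => isCompact_closedBall (0 : ℝ) M).of_isClosed_subset
      isClosed_closure hbox
    have hclosed : IsClosed[weakTopology _] ((⇑) ⁻¹' closure ((⇑) '' A) : Set C₀(ℕ, ℝ)) :=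
      @IsClosed.preimage _ _ (weakTopology _) _ _ continuous_coe_weakTopology _ isClosed_closure
    exact @IsCompact.of_isClosed_subset _ (weakTopology _) _ _
      (isCompact_weakTopology_preimage_coe hK hbox h) (@isClosed_closure _ (weakTopology _) A)
      (@closure_minimal _ (weakTopology _) _ _ (fun z hz => subset_closure ⟨z, hz, rfl⟩) hclosed)

noncomputable def piCLM {X : Type*} [SeminormedAddCommGroup X] [NormedSpace ℝ X] [CompleteSpace X]
    (f : ℕ → X →L[ℝ] ℝ) (hf : WeakStarConv X f 0) : X →L[ℝ] C₀(ℕ, ℝ) :=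
  LinearMap.mkContinuousOfExistsBound
    { toFun := fun x => ofTendsto (fun n => f n x) (by simpa using hf x)
      map_add' := fun x y => ext fun n => map_add (f n) x y
      map_smul' := fun c x => ext fun n => map_smul (f n) c x } <| by
    obtain ⟨C, hC⟩ := banach_steinhaus fun x =>
      (Metric.isBounded_range_of_tendsto _ (hf x)).exists_norm_le.imp
        fun _ h n => h _ (Set.mem_range_self n)
    refine ⟨C, fun x => (norm_le ?_).2 fun n => (f n).le_of_opNorm_le (hC n) x⟩
    exact mul_nonneg ((norm_nonneg _).trans (hC 0)) (norm_nonneg x)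

@[simp]
theorem evalCLM_comp_piCLM {X : Type*} [SeminormedAddCommGroup X] [NormedSpace ℝ X]
    [CompleteSpace X] (f : ℕ → X →L[ℝ] ℝ) (hf : WeakStarConv X f 0) (n : ℕ) :
    (evalCLM n).comp (piCLM f hf) = f n :=
  rfl

end ZeroAtInftyContinuousMap

section Bidual

variable {X : Type*} [SeminormedAddCommGroup X] [NormedSpace ℝ X] {ι : Type*}

theorem isCompact_bidual_evals_closedBall (g : ι → X →L[ℝ] ℝ) :
    IsCompact ((fun φ : (X →L[ℝ] ℝ) →L[ℝ] ℝ => fun i => φ (g i)) '' Metric.closedBall 0 1) := by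
  have := (WeakDual.isCompact_closedBall (𝕜 := ℝ) (0 : (X →L[ℝ] ℝ) →L[ℝ] ℝ) 1).image
    (continuous_pi fun i => WeakDual.eval_continuous (g i))
  convert this using 1
  ext y
  constructor <;> rintro ⟨φ, hφ, rfl⟩ <;> exact ⟨φ, hφ, rfl⟩

theorem closure_evals_closedBall_subset (g : ι → X →L[ℝ] ℝ) :
    closure ((fun x i => g i x) '' Metric.closedBall (0 : X) 1) ⊆
      (fun φ : (X →L[ℝ] ℝ) →L[ℝ] ℝ => fun i => φ (g i)) '' Metric.closedBall 0 1 := by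
  refine closure_minimal ?_ (isCompact_bidual_evals_closedBall g).isClosed
  rintro _ ⟨x, hx, rfl⟩
  refine ⟨NormedSpace.inclusionInDoubleDual ℝ X x, ?_, rfl⟩
  exact (mem_closedBall_zero_iff (a := NormedSpace.inclusionInDoubleDual ℝ X x)).2 <|
    (NormedSpace.double_dual_bound ℝ X x).trans (mem_closedBall_zero_iff.1 hx)

theorem bidual_apply_comp_pi [Fintype ι] (φ : (X →L[ℝ] ℝ) →L[ℝ] ℝ) (f : (ι → ℝ) →L[ℝ] ℝ)
    (g : ι → X →L[ℝ] ℝ) : φ (f.comp (ContinuousLinearMap.pi g)) = f fun i => φ (g i) := by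
  classical
  have hf (v : ι → ℝ) : f v = ∑ i, v i * f (fun j => if i = j then 1 else 0) :=
    LinearMap.pi_apply_eq_sum_univ f.toLinearMap v
  have hfg : f.comp (ContinuousLinearMap.pi g) =
      ∑ i, f (fun j => if i = j then 1 else 0) • g i := by
    ext x
    simp [hf (fun i => g i x), mul_comm]
  rw [hfg, hf]
  simp [mul_comm]

-- Helly: a functional `f` on `ℝ^ι` separating `(φ gᵢ)ᵢ` from the image of the ball pulls back to
-- `ψ = f ∘ (gᵢ)ᵢ ∈ X*` with `‖ψ‖ ≤ u < f (φ gᵢ)ᵢ = φ ψ`.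
theorem bidual_evals_closedBall_subset_closure_of_fintype [Fintype ι] (g : ι → X →L[ℝ] ℝ) :
    (fun φ : (X →L[ℝ] ℝ) →L[ℝ] ℝ => fun i => φ (g i)) '' Metric.closedBall 0 1 ⊆
      closure ((fun x i => g i x) '' Metric.closedBall (0 : X) 1) := by
  rintro _ ⟨φ, hφ, rfl⟩
  by_contra hp
  have hconv : Convex ℝ ((fun x i => g i x) '' Metric.closedBall (0 : X) 1) :=
    (convex_closedBall 0 1).linear_image (ContinuousLinearMap.pi g).toLinearMap
  obtain ⟨f, u, hfu, huf⟩ := geometric_hahn_banach_closed_point hconv.closure isClosed_closure hp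
  set ψ : X →L[ℝ] ℝ := f.comp (ContinuousLinearMap.pi g)
  have hψu : ∀ x ∈ Metric.closedBall (0 : X) 1, ψ x < u := fun x hx =>
    hfu _ (subset_closure ⟨x, hx, rfl⟩)
  have hψ : ‖ψ‖ ≤ u := by
    refine ContinuousLinearMap.opNorm_le_of_unit_norm ?_ fun x hx => ?_
    · simpa using (hψu 0 (Metric.mem_closedBall_self zero_le_one)).le
    · have h₁ := hψu x (by simp [hx])
      have h₂ := hψu (-x) (by simp [hx])
      rw [map_neg] at h₂
      rw [Real.norm_eq_abs, abs_le]
      constructor <;> linarith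
  have : f (fun i => φ (g i)) ≤ u :=
    calc f (fun i => φ (g i)) = φ ψ := (bidual_apply_comp_pi φ f g).symm
      _ ≤ ‖φ‖ * ‖ψ‖ := (le_abs_self _).trans (φ.le_opNorm ψ)
      _ ≤ 1 * u :=
        mul_le_mul ((mem_closedBall_zero_iff (a := φ)).1 hφ) hψ (norm_nonneg _) zero_le_one
      _ = u := one_mul u
  linarith

theorem bidual_evals_closedBall_subset_closure (g : ι → X →L[ℝ] ℝ) :
    (fun φ : (X →L[ℝ] ℝ) →L[ℝ] ℝ => fun i => φ (g i)) '' Metric.closedBall 0 1 ⊆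
      closure ((fun x i => g i x) '' Metric.closedBall (0 : X) 1) := by
  rintro _ ⟨φ, hφ, rfl⟩
  rw [mem_closure_iff]
  intro o ho hφo
  obtain ⟨I, u, hu, hIu⟩ := isOpen_pi_iff.1 ho _ hφo
  have hφI := bidual_evals_closedBall_subset_closure_of_fintype (fun i : I => g i) ⟨φ, hφ, rfl⟩
  obtain ⟨_, hxu, x, hx, rfl⟩ := mem_closure_iff.1 hφI (Set.univ.pi fun i : I => u i)
    (isOpen_set_pi Set.finite_univ fun i _ => (hu i i.2).1) fun i _ => (hu i i.2).2
  exact ⟨_, hIu fun i hi => hxu ⟨i, hi⟩ (Set.mem_univ _), x, hx, rfl⟩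

theorem closure_evals_closedBall_eq (g : ι → X →L[ℝ] ℝ) :
    closure ((fun x i => g i x) '' Metric.closedBall (0 : X) 1) =
      (fun φ : (X →L[ℝ] ℝ) →L[ℝ] ℝ => fun i => φ (g i)) '' Metric.closedBall 0 1 :=
  (closure_evals_closedBall_subset g).antisymm (bidual_evals_closedBall_subset_closure g)

end Bidual

section Grothendieck

open ZeroAtInftyContinuousMap

theorem weakConv_zero_iff_forall_closedBall {Z : Type*} [SeminormedAddCommGroup Z]
    [NormedSpace ℝ Z] (v : ℕ → Z) :
    WeakConv Z v 0 ↔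
      ∀ φ ∈ Metric.closedBall (0 : Z →L[ℝ] ℝ) 1, Tendsto (fun n => φ (v n)) atTop (𝓝 0) := by
  refine ⟨fun h φ _ => by simpa using h φ, fun h φ => ?_⟩
  set c := ‖φ‖ + 1
  have hc : 0 < c := by positivity
  have hφc : c⁻¹ • φ ∈ Metric.closedBall (0 : Z →L[ℝ] ℝ) 1 := by
    rw [mem_closedBall_zero_iff, norm_smul, norm_inv, Real.norm_of_nonneg hc.le,
      inv_mul_le_iff₀ hc, mul_one]
    exact (lt_add_one _).le
  simpa [← mul_assoc, hc.ne'] using (h _ hφc).const_mul c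

variable {X : Type*} [SeminormedAddCommGroup X] [NormedSpace ℝ X]

theorem isWeaklyCompactOp_iff_weakConv (T : X →L[ℝ] C₀(ℕ, ℝ)) :
    IsWeaklyCompactOp T ↔ WeakConv (X →L[ℝ] ℝ) (fun n => (evalCLM n).comp T) 0 := by
  rw [IsWeaklyCompactOp,
    isCompact_weakTopology_closure_iff (T.lipschitz.isBounded_image Metric.isBounded_closedBall),
    Set.image_image, weakConv_zero_iff_forall_closedBall]
  change (∀ y ∈ closure ((fun x n => (evalCLM n).comp T x) '' Metric.closedBall 0 1), _) ↔ _
  rw [closure_evals_closedBall_eq, Set.forall_mem_image]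

theorem weakStarConv_evalCLM_comp (T : X →L[ℝ] C₀(ℕ, ℝ)) :
    WeakStarConv X (fun n => (evalCLM n).comp T) 0 :=
  fun x => by simpa using tendsto_atTop_zero (T x)

theorem isGrothendieck_iff_weakStarConv_zero :
    IsGrothendieck X ↔
      ∀ f : ℕ → X →L[ℝ] ℝ, WeakStarConv X f 0 → WeakConv (X →L[ℝ] ℝ) f 0 := by
  refine ⟨fun h f hf => h f 0 hf, fun h f g hfg φ => ?_⟩
  have hfg₀ : WeakStarConv X (fun n => f n - g) 0 := fun x => by
    simpa using (hfg x).sub_const (g x)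
  simpa using (h _ hfg₀ φ).add_const (φ g)

end Grothendieck

/-- `X` is Grothendieck iff every operator `X → c₀` is weakly compact. -/
theorem grothendieck_iff_weaklyCompact_to_c0 (X : Type*)
    [NormedAddCommGroup X] [NormedSpace ℝ X] [CompleteSpace X] :
    IsGrothendieck X ↔ ∀ T : X →L[ℝ] C₀(ℕ, ℝ), IsWeaklyCompactOp T := by
  rw [isGrothendieck_iff_weakStarConv_zero]
  refine ⟨fun hX T => (isWeaklyCompactOp_iff_weakConv T).2 (hX _ (weakStarConv_evalCLM_comp T)),
    fun hT f hf => ?_⟩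
  simpa using (isWeaklyCompactOp_iff_weakConv _).1 (hT (ZeroAtInftyContinuousMap.piCLM f hf))
end

section
/- A Grothendieck Banach space whose dual unit ball is weak*-sequentially compact is reflexive. -/
open Filter Topology ZeroAtInfty

/-! The unit ball of `X*` is weakly sequentially compact: a weak*-convergent subsequence of a
bounded sequence converges weakly because `X` is Grothendieck. Such a Banach space `Y = X*` is
reflexive, and reflexivity of `X*` passes to `X`, since a functional on `X**` vanishing on `X` is
then some `f ∈ X*` vanishing on `X`.

For `F ∈ Y**` with `‖F‖ ≤ 1` and `d = dist(F, Y)`, Helly's theorem lets one choose alternately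
`fₙ` in the unit ball of `Y*` and `xₙ` in the unit ball of `Y` with `fₙ xⱼ ≈ 0` for `j < n`,
`F fₙ ≈ d` and `fᵢ xₙ ≈ F fᵢ` for `i < n`, with errors `1/(n+1)`. A weak limit `y` of a subsequence
of `(xₙ)` then satisfies `fᵢ y = F fᵢ`, while it lies in the closed subspace of vectors on which
the bounded sequence `(fₙ)` tends to `0`. Hence `d = lim F fₙ = lim fₙ y = 0`. -/

open Metric NormedSpace

theorem exists_seq_of_forall_fin_exists {α : Type*} (P : (n : ℕ) → (Fin n → α) → α → Prop)
    (h : ∀ n v, ∃ b, P n v b) : ∃ a : ℕ → α, ∀ n, P n (fun k => a k) (a n) := by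
  choose g hg using h
  let hist : (n : ℕ) → Fin n → α := fun n => Nat.rec Fin.elim0 (fun n v => Fin.snoc v (g n v)) n
  have hist_eq : ∀ n, hist n = fun k : Fin n => g k (hist k) := by
    intro n
    induction n with
    | zero => funext k; exact k.elim0
    | succ n ih =>
      funext k
      refine Fin.lastCases ?_ (fun k => ?_) k
      · exact Fin.snoc_last (α := fun _ => α) _ _
      · exact (Fin.snoc_castSucc (α := fun _ => α) _ _ _).trans (congrFun ih k)
  exact ⟨fun n => g n (hist n), fun n => hist_eq n ▸ hg n (hist n)⟩

theorem tendsto_of_abs_sub_le {α : Type*} {l : Filter α} {u ε : α → ℝ} {L : ℝ}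
    (hε : Tendsto ε l (𝓝 0)) (h : ∀ᶠ n in l, |u n - L| ≤ ε n) : Tendsto u l (𝓝 L) :=
  tendsto_iff_dist_tendsto_zero.2 <|
    squeeze_zero' (Eventually.of_forall fun _ => dist_nonneg) (by simpa [Real.dist_eq] using h) hε

section Dual

variable {E : Type*} [NormedAddCommGroup E] [NormedSpace ℝ E]

theorem Submodule.mem_of_forall_dual_eq_zero (S : Submodule ℝ E) (hS : IsClosed (S : Set E))
    {x : E} (h : ∀ g : StrongDual ℝ E, (∀ s ∈ S, g s = 0) → g x = 0) : x ∈ S := by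
  have : IsClosed (S : Set E) := hS
  by_contra hx
  obtain ⟨g, hg⟩ := SeparatingDual.exists_ne_zero (R := ℝ)
    (mt (Submodule.Quotient.mk_eq_zero S).1 hx)
  exact hg (h (g.comp S.mkQL) fun s hs => by simp [(Submodule.Quotient.mk_eq_zero S).2 hs])

theorem Submodule.mem_of_weakConv (S : Submodule ℝ E) (hS : IsClosed (S : Set E)) {x : ℕ → E}
    {y : E} (hx : ∀ n, x n ∈ S) (hxy : WeakConv E x y) : y ∈ S :=
  S.mem_of_forall_dual_eq_zero hS fun g hg =>
    tendsto_nhds_unique (hxy g) (by simp only [hg _ (hx _), tendsto_const_nhds])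

theorem Submodule.mul_infDist_le_norm_smul_add (S : Submodule ℝ E) (x : E) {s : E} (hs : s ∈ S)
    (t : ℝ) : t * infDist x S ≤ ‖t • x + s‖ := by
  rcases le_or_gt t 0 with ht | ht
  · exact (mul_nonpos_of_nonpos_of_nonneg ht infDist_nonneg).trans (norm_nonneg _)
  calc t * infDist x S ≤ t * dist x (-t⁻¹ • s) :=
        mul_le_mul_of_nonneg_left (infDist_le_dist_of_mem (S.smul_mem _ hs)) ht.le
    _ = ‖t • (x + t⁻¹ • s)‖ := by
        rw [norm_smul, Real.norm_of_nonneg ht.le, dist_eq_norm, neg_smul, sub_neg_eq_add]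
    _ = ‖t • x + s‖ := by rw [smul_add, smul_smul, mul_inv_cancel₀ ht.ne', one_smul]

end Dual

section TendstoZero

variable {ι E G : Type*} [NormedAddCommGroup E] [NormedSpace ℝ E] [NormedAddCommGroup G]
  [NormedSpace ℝ G]

def submoduleTendstoZero (f : ι → E →L[ℝ] G) (l : Filter ι) : Submodule ℝ E where
  carrier := {v | Tendsto (fun i => f i v) l (𝓝 0)}
  zero_mem' := by simp only [Set.mem_ofPred_eq, map_zero, tendsto_const_nhds]
  add_mem' {v w} hv hw := by simpa only [Set.mem_ofPred_eq, map_add, add_zero] using hv.add hw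
  smul_mem' c v hv := by simpa only [Set.mem_ofPred_eq, map_smul, smul_zero] using hv.const_smul c

@[simp]
theorem mem_submoduleTendstoZero {f : ι → E →L[ℝ] G} {l : Filter ι} {v : E} :
    v ∈ submoduleTendstoZero f l ↔ Tendsto (fun i => f i v) l (𝓝 0) :=
  Iff.rfl

theorem isClosed_submoduleTendstoZero {f : ι → E →L[ℝ] G} (hf : ∃ C, ∀ i, ‖f i‖ ≤ C)
    (l : Filter ι) : IsClosed (submoduleTendstoZero f l : Set E) :=
  Equicontinuous.isClosed_setOfPred_tendsto (f := fun _ => 0)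
    (((NormedSpace.equicontinuous_TFAE f).out 1 5).2 hf) continuous_const

end TendstoZero

section Helly

variable {E : Type*} [NormedAddCommGroup E] [NormedSpace ℝ E] {ι : Type*} [Fintype ι]

theorem StrongDual.apply_eq_sum_mul_apply_single [DecidableEq ι] (g : StrongDual ℝ (ι → ℝ))
    (v : ι → ℝ) : g v = ∑ i, v i * g (Pi.single i 1) := by
  conv_lhs => rw [pi_eq_sum_univ' v]
  simp only [map_sum, map_smul, smul_eq_mul]

-- Helly's theorem
theorem mem_closure_pi_image_closedBall (h : ι → StrongDual ℝ E) (c : ι → ℝ)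
    (hc : ∀ a : ι → ℝ, ∑ i, a i * c i ≤ ‖∑ i, a i • h i‖) :
    c ∈ closure (ContinuousLinearMap.pi h '' closedBall (0 : E) 1) := by
  classical
  set T := ContinuousLinearMap.pi h
  by_contra hcT
  obtain ⟨g, u, hgT, hgc⟩ := geometric_hahn_banach_closed_point
    ((convex_closedBall (0 : E) 1).linear_image T.toLinearMap).closure isClosed_closure hcT
  have hgT' (x : E) (hx : ‖x‖ ≤ 1) : g (T x) < u :=
    hgT _ (subset_closure ⟨x, mem_closedBall_zero_iff.2 hx, rfl⟩)
  have hcomp : g.comp T = ∑ i, g (Pi.single i 1) • h i := by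
    ext x
    rw [ContinuousLinearMap.comp_apply, StrongDual.apply_eq_sum_mul_apply_single g]
    simp [T, mul_comm]
  have hnorm : ‖g.comp T‖ ≤ u := by
    refine ContinuousLinearMap.opNorm_le_of_unit_norm (by simpa using (hgT' 0 (by simp)).le)
      fun x hx => ?_
    have hneg := hgT' (-x) (by simp [hx])
    rw [map_neg, map_neg] at hneg
    rw [Real.norm_eq_abs, abs_le, ContinuousLinearMap.comp_apply]
    exact ⟨by linarith, (hgT' x hx.le).le⟩
  have hgc' : g c ≤ ‖g.comp T‖ := by
    rw [StrongDual.apply_eq_sum_mul_apply_single g c, hcomp]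
    simpa only [mul_comm] using hc fun i => g (Pi.single i 1)
  linarith

theorem exists_norm_le_one_forall_abs_sub_lt (h : ι → StrongDual ℝ E) (c : ι → ℝ)
    (hc : ∀ a : ι → ℝ, ∑ i, a i * c i ≤ ‖∑ i, a i • h i‖) {δ : ℝ} (hδ : 0 < δ) :
    ∃ x : E, ‖x‖ ≤ 1 ∧ ∀ i, |h i x - c i| < δ := by
  obtain ⟨_, ⟨x, hx, rfl⟩, hdist⟩ :=
    Metric.mem_closure_iff.1 (mem_closure_pi_image_closedBall h c hc) δ hδ
  refine ⟨x, mem_closedBall_zero_iff.1 hx, fun i => ?_⟩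
  rw [abs_sub_comm, ← Real.dist_eq]
  exact (dist_le_pi_dist _ _ i).trans_lt hdist

theorem exists_norm_le_one_forall_abs_apply_sub_lt (F : StrongDual ℝ (StrongDual ℝ E))
    (hF : ‖F‖ ≤ 1) (h : ι → StrongDual ℝ E) {δ : ℝ} (hδ : 0 < δ) :
    ∃ x : E, ‖x‖ ≤ 1 ∧ ∀ i, |h i x - F (h i)| < δ :=
  exists_norm_le_one_forall_abs_sub_lt h (fun i => F (h i)) (fun a => by
    simpa [map_sum, map_smul] using (le_abs_self _).trans
      ((F.le_opNorm (∑ i, a i • h i)).trans (mul_le_of_le_one_left (norm_nonneg _) hF)))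
    hδ

end Helly

def UnitBallWeaklySeqCompact (Y : Type*) [NormedAddCommGroup Y] [NormedSpace ℝ Y] : Prop :=
  ∀ x : ℕ → Y, (∀ n, ‖x n‖ ≤ 1) → ∃ (y : Y) (φ : ℕ → ℕ), StrictMono φ ∧ WeakConv Y (x ∘ φ) y

section Reflexive

variable {Y : Type*} [NormedAddCommGroup Y] [NormedSpace ℝ Y]

theorem isClosed_range_inclusionInDoubleDual [CompleteSpace Y] :
    IsClosed (Set.range (inclusionInDoubleDual ℝ Y)) := by
  have hJ : Isometry (inclusionInDoubleDual ℝ Y) := (inclusionInDoubleDualLi ℝ (E := Y)).isometry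
  exact hJ.isClosedEmbedding.isClosed_range

theorem exists_norm_le_one_abs_sub_infDist_lt (F : StrongDual ℝ (StrongDual ℝ Y)) {ι : Type*}
    [Fintype ι] (y : ι → Y) {δ : ℝ} (hδ : 0 < δ) :
    ∃ f : StrongDual ℝ Y, ‖f‖ ≤ 1 ∧
      |F f - infDist F (Set.range (inclusionInDoubleDual ℝ Y))| < δ ∧ ∀ j, |f (y j)| < δ := by
  set J := inclusionInDoubleDual ℝ Y
  obtain ⟨f, hf, hfy⟩ := exists_norm_le_one_forall_abs_sub_lt
    (fun o : Option ι => o.elim F fun j => J (y j)) (fun o => o.elim (infDist F (Set.range J)) 0)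
    (fun a => by
      have := (LinearMap.range J.toLinearMap).mul_infDist_le_norm_smul_add F
        (LinearMap.mem_range_self J.toLinearMap (∑ j, a (some j) • y j)) (a none)
      rw [LinearMap.coe_range, map_sum] at this
      simpa [Fintype.sum_option] using this)
    hδ
  exact ⟨f, hf, hfy none, fun j => by simpa [J] using hfy (some j)⟩

theorem exists_seq_tendsto_infDist_range_inclusionInDoubleDual {F : StrongDual ℝ (StrongDual ℝ Y)} (hF : ‖F‖ ≤ 1) :
    ∃ (f : ℕ → StrongDual ℝ Y) (x : ℕ → Y), (∀ n, ‖f n‖ ≤ 1) ∧ (∀ n, ‖x n‖ ≤ 1) ∧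
      (∀ j, Tendsto (fun n => f n (x j)) atTop (𝓝 0)) ∧
      (∀ i, Tendsto (fun n => f i (x n)) atTop (𝓝 (F (f i)))) ∧
      Tendsto (fun n => F (f n)) atTop (𝓝 (infDist F (Set.range (inclusionInDoubleDual ℝ Y)))) := by
  set d := infDist F (Set.range (inclusionInDoubleDual ℝ Y))
  set ε : ℕ → ℝ := fun n => 1 / ((n : ℝ) + 1)
  have hε (n : ℕ) : 0 < ε n := by positivity
  obtain ⟨a, ha⟩ := exists_seq_of_forall_fin_exists (α := StrongDual ℝ Y × Y)
    (fun n v b => ‖b.1‖ ≤ 1 ∧ ‖b.2‖ ≤ 1 ∧ |F b.1 - d| < ε n ∧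
      (∀ j, |b.1 (v j).2| < ε n) ∧ ∀ j, |(v j).1 b.2 - F (v j).1| < ε n)
    fun n v => by
      obtain ⟨f, hf, hfF, hfv⟩ := exists_norm_le_one_abs_sub_infDist_lt F (fun j => (v j).2) (hε n)
      obtain ⟨x, hx, hxv⟩ :=
        exists_norm_le_one_forall_abs_apply_sub_lt F hF (fun j => (v j).1) (hε n)
      exact ⟨(f, x), hf, hx, hfF, hfv, hxv⟩
  have hlim {u : ℕ → ℝ} {L : ℝ} (h : ∀ᶠ n in atTop, |u n - L| < ε n) : Tendsto u atTop (𝓝 L) :=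
    tendsto_of_abs_sub_le tendsto_one_div_add_atTop_nhds_zero_nat (h.mono fun _ => le_of_lt)
  refine ⟨fun n => (a n).1, fun n => (a n).2, fun n => (ha n).1, fun n => (ha n).2.1,
    fun j => hlim ?_, fun i => hlim ?_, hlim (.of_forall fun n => (ha n).2.2.1)⟩
  · filter_upwards [eventually_gt_atTop j] with n hn
    simpa using (ha n).2.2.2.1 ⟨j, hn⟩
  · filter_upwards [eventually_gt_atTop i] with n hn
    exact (ha n).2.2.2.2 ⟨i, hn⟩

theorem UnitBallWeaklySeqCompact.infDist_range_inclusionInDoubleDual_eq_zero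
    (hY : UnitBallWeaklySeqCompact Y) {F : StrongDual ℝ (StrongDual ℝ Y)} (hF : ‖F‖ ≤ 1) :
    infDist F (Set.range (inclusionInDoubleDual ℝ Y)) = 0 := by
  obtain ⟨f, x, hf, hx, hfx, hxf, hFf⟩ := exists_seq_tendsto_infDist_range_inclusionInDoubleDual hF
  obtain ⟨y, φ, hφ, hxy⟩ := hY x hx
  have hfy (i : ℕ) : f i y = F (f i) :=
    tendsto_nhds_unique (hxy (f i)) ((hxf i).comp hφ.tendsto_atTop)
  have hy : y ∈ submoduleTendstoZero f atTop :=
    (submoduleTendstoZero f atTop).mem_of_weakConv (isClosed_submoduleTendstoZero ⟨1, hf⟩ _)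
      (fun n => hfx (φ n)) hxy
  exact tendsto_nhds_unique hFf (by simpa only [mem_submoduleTendstoZero, hfy] using hy)

theorem UnitBallWeaklySeqCompact.surjective_inclusionInDoubleDual [CompleteSpace Y]
    (hY : UnitBallWeaklySeqCompact Y) : Function.Surjective (inclusionInDoubleDual ℝ Y) := by
  intro F
  set t : ℝ := ‖F‖ + 1
  have ht : 0 < t := by positivity
  have hF : ‖t⁻¹ • F‖ ≤ 1 := by
    refine (ContinuousLinearMap.opNorm_smul_le _ _).trans ?_
    rw [Real.norm_of_nonneg (inv_nonneg.2 ht.le), inv_mul_le_one₀ ht]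
    linarith
  obtain ⟨y, hy⟩ := (isClosed_range_inclusionInDoubleDual.mem_iff_infDist_zero (Set.range_nonempty _)).2
    (hY.infDist_range_inclusionInDoubleDual_eq_zero hF)
  refine ⟨t • y, ?_⟩
  rw [map_smul, hy, smul_smul, mul_inv_cancel₀ ht.ne', one_smul]

theorem surjective_inclusionInDoubleDual_of_dual [CompleteSpace Y]
    (h : Function.Surjective (inclusionInDoubleDual ℝ (StrongDual ℝ Y))) :
    Function.Surjective (inclusionInDoubleDual ℝ Y) := by
  intro F
  have hF := (LinearMap.range (inclusionInDoubleDual ℝ Y).toLinearMap).mem_of_forall_dual_eq_zero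
    (by rw [LinearMap.coe_range]; exact isClosed_range_inclusionInDoubleDual) (x := F)
    fun Λ hΛ => by
      obtain ⟨f, rfl⟩ := h Λ
      have hf : f = 0 := ContinuousLinearMap.ext fun y => hΛ _ (LinearMap.mem_range_self _ y)
      simp [hf]
  exact LinearMap.mem_range.1 hF

end Reflexive

theorem IsGrothendieck.unitBallWeaklySeqCompact_dual {X : Type*} [NormedAddCommGroup X]
    [NormedSpace ℝ X] (hX : IsGrothendieck X)
    (hball : ∀ f : ℕ → X →L[ℝ] ℝ, (∀ n, ‖f n‖ ≤ 1) →
      ∃ (g : X →L[ℝ] ℝ) (φ : ℕ → ℕ), StrictMono φ ∧ WeakStarConv X (fun k => f (φ k)) g) :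
    UnitBallWeaklySeqCompact (StrongDual ℝ X) := fun f hf => by
  obtain ⟨g, φ, hφ, hfg⟩ := hball f hf
  exact ⟨g, φ, hφ, hX _ g hfg⟩

/-- A Grothendieck space with weak*-sequentially compact dual ball is reflexive. -/
theorem grothendieck_wstarSeqCompact_reflexive (X : Type*)
    [NormedAddCommGroup X] [NormedSpace ℝ X] [CompleteSpace X]
    (hX : IsGrothendieck X)
    (hball : ∀ f : ℕ → X →L[ℝ] ℝ, (∀ n, ‖f n‖ ≤ 1) →
      ∃ (g : X →L[ℝ] ℝ) (φ : ℕ → ℕ), StrictMono φ ∧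
        WeakStarConv X (fun k => f (φ k)) g) :
    Function.Surjective (NormedSpace.inclusionInDoubleDual ℝ X) :=
  surjective_inclusionInDoubleDual_of_dual
    (hX.unitBallWeaklySeqCompact_dual hball).surjective_inclusionInDoubleDual
end

section
/- The Grothendieck property is a three-space property: if M is a closed subspace of a Banach space X such that both M and X/M are Grothendieck spaces, then X is a Grothendieck space. -/
open Filter Topology ZeroAtInfty

/-!
Let `f n` be weak*-null in `X*`, `ψ ∈ X**` and suppose `ψ (f n) ≥ ε > 0` infinitely often. The
restrictions `f n|M` are weak*-null, hence weakly null since `M` is Grothendieck, so by Mazur's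
theorem there are convex combinations `c k` of `{f n : n ≥ k, ψ (f n) ≥ ε}` with `‖c k|M‖ → 0`.
Hahn–Banach extensions `e k` of `c k|M` then tend to `0` in norm, and `c k - e k` vanishes on `M`,
so it descends to a weak*-null, hence (as `X ⧸ M` is Grothendieck) weakly null, sequence in
`(X ⧸ M)*`. Thus `ψ (c k) → 0`, although `ψ (c k) ≥ ε` for all `k`.
-/

theorem zero_mem_closure_convexHull_of_weakConv {E : Type*} [SeminormedAddCommGroup E]
    [NormedSpace ℝ E] {u : ℕ → E} (hu : WeakConv E u 0) {p : ℕ → Prop}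
    (hp : ∃ᶠ n in atTop, p n) : (0 : E) ∈ closure (convexHull ℝ (u '' {n | p n})) := by
  by_contra h
  obtain ⟨φ, a, hφ0, hφ⟩ :=
    geometric_hahn_banach_point_closed (convex_convexHull ℝ _).closure isClosed_closure h
  rw [map_zero] at hφ0
  have hsmall : ∀ᶠ n in atTop, φ (u n) < a := by
    simpa using (hu φ).eventually_lt_const (by simpa using hφ0)
  obtain ⟨n, hpn, hn⟩ := (hp.and_eventually hsmall).exists
  exact lt_asymm hn (hφ _ (subset_closure (subset_convexHull ℝ _ ⟨n, hpn, rfl⟩)))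

theorem tendsto_zero_of_mem_convexHull_tail {E F : Type*} [AddCommGroup E] [Module ℝ E]
    [SeminormedAddCommGroup F] [NormedSpace ℝ F] (g : E →ₗ[ℝ] F) {u c : ℕ → E}
    (hu : Tendsto (g ∘ u) atTop (𝓝 0)) (hc : ∀ k, c k ∈ convexHull ℝ (u '' Set.Ici k)) :
    Tendsto (g ∘ c) atTop (𝓝 0) := by
  rw [Metric.nhds_basis_closedBall.tendsto_right_iff] at hu ⊢
  intro ε hε
  obtain ⟨N, hN⟩ := eventually_atTop.1 (hu ε hε)
  refine eventually_atTop.2 ⟨N, fun k hk => ?_⟩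
  refine convexHull_min ?_ ((convex_closedBall 0 ε).linear_preimage g) (hc k)
  rintro _ ⟨n, hn, rfl⟩
  exact hN n (hk.trans hn)

section ThreeSpace

variable {X : Type*} [SeminormedAddCommGroup X] [NormedSpace ℝ X] (M : Submodule ℝ X)

noncomputable def restrictDual : (X →L[ℝ] ℝ) →L[ℝ] (M →L[ℝ] ℝ) :=
  (ContinuousLinearMap.compL ℝ M X ℝ).flip M.subtypeL

@[simp]
theorem restrictDual_apply (f : X →L[ℝ] ℝ) (m : M) : restrictDual M f m = f m := rfl

theorem weakConv_zero_of_tendsto_restrictDual_zero (hQ : IsGrothendieck (X ⧸ M))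
    {c : ℕ → X →L[ℝ] ℝ} (hc : WeakStarConv X c 0)
    (hcM : Tendsto (fun k => restrictDual M (c k)) atTop (𝓝 0)) :
    WeakConv (X →L[ℝ] ℝ) c 0 := by
  choose e he_ext he_norm using fun k => exists_extension_norm_eq M (restrictDual M (c k))
  have he : Tendsto e atTop (𝓝 0) := by
    rw [tendsto_zero_iff_norm_tendsto_zero]
    simpa only [he_norm] using (tendsto_zero_iff_norm_tendsto_zero (E := M →L[ℝ] ℝ)).1 hcM
  have hker : ∀ k, M ≤ (c k - e k).ker := fun k x hx => by
    simp [he_ext k ⟨x, hx⟩]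
  set q : ℕ → (X ⧸ M) →L[ℝ] ℝ := fun k => M.liftQL (c k - e k) (hker k)
  have hq : WeakStarConv (X ⧸ M) q 0 := by
    intro z
    obtain ⟨x, rfl⟩ := M.mkQ_surjective z
    simpa [q] using
      (hc x).sub ((ContinuousLinearMap.apply ℝ ℝ x).continuous.tendsto 0 |>.comp he)
  intro ψ
  have hψq := hQ q 0 hq (ψ.comp ((ContinuousLinearMap.compL ℝ X (X ⧸ M) ℝ).flip M.mkQL))
  have hqc : ∀ k, (q k).comp M.mkQL = c k - e k := fun k => rfl
  have hψe : Tendsto (fun k => ψ (e k)) atTop (𝓝 0) :=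
    (ψ.continuous.tendsto' 0 0 (map_zero ψ)).comp he
  simpa [hqc] using hψq.add hψe

theorem exists_mem_convexHull_norm_restrictDual_lt (hM : IsGrothendieck M)
    {f : ℕ → X →L[ℝ] ℝ} (hf : WeakStarConv X f 0) {p : ℕ → Prop} (hp : ∃ᶠ n in atTop, p n)
    {δ : ℝ} (hδ : 0 < δ) :
    ∃ c ∈ convexHull ℝ (f '' {n | p n}), ‖restrictDual M c‖ < δ := by
  have hfM : WeakConv (M →L[ℝ] ℝ) (fun n => restrictDual M (f n)) 0 :=
    hM _ 0 fun m => by simpa using hf m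
  have h0 := zero_mem_closure_convexHull_of_weakConv hfM hp
  have hhull := (restrictDual M).toLinearMap.image_convexHull (f '' {n | p n})
  rw [ContinuousLinearMap.coe_coe] at hhull
  rw [← Set.image_image, ← hhull] at h0
  obtain ⟨_, ⟨c, hc, rfl⟩, hcδ⟩ := Metric.mem_closure_iff.1 h0 δ hδ
  exact ⟨c, hc, (dist_zero_left (restrictDual M c)).symm.trans_lt hcδ⟩

theorem eventually_apply_lt_of_weakStarConv_zero (hM : IsGrothendieck M)
    (hQ : IsGrothendieck (X ⧸ M)) {f : ℕ → X →L[ℝ] ℝ} (hf : WeakStarConv X f 0)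
    (ψ : (X →L[ℝ] ℝ) →L[ℝ] ℝ) {ε : ℝ} (hε : 0 < ε) : ∀ᶠ n in atTop, ψ (f n) < ε := by
  by_contra hfreq
  simp only [not_eventually, not_lt] at hfreq
  choose c hc hcM using fun k : ℕ => exists_mem_convexHull_norm_restrictDual_lt M hM hf
    (hfreq.and_eventually (eventually_ge_atTop k)) (Nat.one_div_pos_of_nat (n := k))
  have hc_tail (k : ℕ) : c k ∈ convexHull ℝ (f '' Set.Ici k) :=
    convexHull_mono (Set.image_mono fun n hn => hn.2) (hc k)
  have hc_weakStar : WeakStarConv X c 0 := fun x =>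
    tendsto_zero_of_mem_convexHull_tail (ContinuousLinearMap.apply ℝ ℝ x).toLinearMap
      (hf x) hc_tail
  have hc_restrict : Tendsto (fun k => restrictDual M (c k)) atTop (𝓝 0) :=
    squeeze_zero_norm (f := fun k => restrictDual M (c k)) (fun k => (hcM k).le)
      tendsto_one_div_add_atTop_nhds_zero_nat
  have hψc (k : ℕ) : ε ≤ ψ (c k) := by
    refine convexHull_min ?_ (convex_halfSpace_ge ψ.isLinear ε) (hc k)
    rintro _ ⟨n, hn, rfl⟩
    exact hn.1
  have hψc_lim := weakConv_zero_of_tendsto_restrictDual_zero M hQ hc_weakStar hc_restrict ψ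
  rw [map_zero] at hψc_lim
  exact hε.not_ge (ge_of_tendsto' hψc_lim hψc)

theorem weakConv_zero_of_weakStarConv_zero (hM : IsGrothendieck M) (hQ : IsGrothendieck (X ⧸ M))
    {f : ℕ → X →L[ℝ] ℝ} (hf : WeakStarConv X f 0) : WeakConv (X →L[ℝ] ℝ) f 0 := by
  intro ψ
  rw [map_zero, tendsto_order]
  refine ⟨fun a ha => ?_, fun a ha => eventually_apply_lt_of_weakStarConv_zero M hM hQ hf ψ ha⟩
  simpa using eventually_apply_lt_of_weakStarConv_zero M hM hQ hf (-ψ) (neg_pos.2 ha)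

end ThreeSpace

theorem grothendieck_threeSpace_general (X : Type*)
    [NormedAddCommGroup X] [NormedSpace ℝ X]
    (M : Submodule ℝ X)
    (h1 : IsGrothendieck M) (h2 : IsGrothendieck (X ⧸ M)) :
    IsGrothendieck X := by
  intro f g hfg ψ
  have hnull := weakConv_zero_of_weakStarConv_zero M h1 h2 (f := fun n => f n - g)
    fun x => by simpa using (hfg x).sub_const (g x)
  simpa using (hnull ψ).add_const (ψ g)

/-- The Grothendieck property is a three-space property. -/
theorem grothendieck_threeSpace (X : Type*)
    [NormedAddCommGroup X] [NormedSpace ℝ X] [CompleteSpace X]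
    (M : Submodule ℝ X) (hM : IsClosed (M : Set X))
    (h1 : IsGrothendieck M) (h2 : IsGrothendieck (X ⧸ M)) :
    IsGrothendieck X :=
  grothendieck_threeSpace_general X M h1 h2
end

section
/- If (P_i) is a Schauder decomposition of a Grothendieck Banach space X, then the adjoint projections (P_i*) form a Schauder decomposition of X*; that is, for every f ∈ X*, the partial sums S_n* f = (P_1 + ⋯ + P_n)* f converge to f in norm. -/
/-!
Let `Sₙ = P₀ + ⋯ + Pₙ₋₁`. The `Sₙ` converge strongly to the identity, so they are uniformly
bounded (Banach–Steinhaus) and `f ∘ Sₙ → f` weak*. Since `X` is Grothendieck, this convergence is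
weak, and Mazur's lemma puts `f` in the norm closure of the convex hull of the `f ∘ Sₘ`.
Each `f ∘ Sₘ` is fixed by `g ↦ g ∘ Sₙ` for `n ≥ m`, and the set of `g` with `g ∘ Sₙ → g` in norm
is convex and, by the uniform bound, closed; hence it contains `f`.
-/

open Filter Topology ZeroAtInfty

open Finset

section PartialSums

variable {R M : Type*} [Semiring R] [TopologicalSpace M] [AddCommMonoid M] [Module R M]
  {P : ℕ → M →L[R] M}

theorem comp_self_of_tendsto_sum_range [T2Space M] (horth : ∀ i j, i ≠ j → (P i).comp (P j) = 0)
    (hdecomp : ∀ x : M, Tendsto (fun n => ∑ i ∈ range n, P i x) atTop (𝓝 x)) (j : ℕ) :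
    (P j).comp (P j) = P j := by
  ext x
  have hsum : ∀ n > j, ∑ i ∈ range n, P i (P j x) = P j (P j x) := fun n hn =>
    sum_eq_single_of_mem j (mem_range.2 hn) fun i _ hij => by
      simpa using DFunLike.congr_fun (horth i j hij) x
  exact tendsto_nhds_unique
    (tendsto_const_nhds.congr' ((eventually_gt_atTop j).mono fun n hn => (hsum n hn).symm))
    (hdecomp (P j x))

theorem sum_range_comp_sum_range_of_le [ContinuousAdd M]
    (horth : ∀ i j, i ≠ j → (P i).comp (P j) = 0) (hidem : ∀ i, (P i).comp (P i) = P i)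
    {m n : ℕ} (hmn : m ≤ n) :
    (∑ i ∈ range m, P i).comp (∑ j ∈ range n, P j) = ∑ i ∈ range m, P i :=
  calc (∑ i ∈ range m, P i).comp (∑ j ∈ range n, P j)
      = ∑ i ∈ range m, ∑ j ∈ range n, (P i).comp (P j) := by
        rw [ContinuousLinearMap.finsetSum_comp]
        simp only [ContinuousLinearMap.comp_finsetSum]
    _ = ∑ i ∈ range m, (P i).comp (P i) :=
        sum_congr rfl fun i hi =>
          sum_eq_single_of_mem i (range_mono hmn hi) fun j _ hji => horth i j hji.symm
    _ = ∑ i ∈ range m, P i := by simp only [hidem]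

end PartialSums

theorem exists_forall_opNorm_le_of_tendsto {𝕜 E F : Type*} [NontriviallyNormedField 𝕜]
    [NormedAddCommGroup E] [NormedSpace 𝕜 E] [CompleteSpace E]
    [SeminormedAddCommGroup F] [NormedSpace 𝕜 F] {T : ℕ → E →L[𝕜] F} {A : E → F}
    (h : ∀ x, Tendsto (fun n => T n x) atTop (𝓝 (A x))) : ∃ C, ∀ n, ‖T n‖ ≤ C :=
  banach_steinhaus fun x =>
    let ⟨C, hC⟩ := (h x).norm.bddAbove_range
    ⟨C, fun n => hC ⟨n, rfl⟩⟩

theorem isClosed_setOf_tendsto_comp {𝕜 E F ι : Type*} [NontriviallyNormedField 𝕜]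
    [SeminormedAddCommGroup E] [NormedSpace 𝕜 E] [SeminormedAddCommGroup F] [NormedSpace 𝕜 F]
    {T : ι → E →L[𝕜] E} {l : Filter ι} {C : ℝ} (hC : ∀ i, ‖T i‖ ≤ C) :
    IsClosed {g : E →L[𝕜] F | Tendsto (fun i => g.comp (T i)) l (𝓝 g)} := by
  have hlip : ∀ i, LipschitzWith C.toNNReal fun g : E →L[𝕜] F => g.comp (T i) := fun i =>
    LipschitzWith.of_dist_le_mul fun g h => by
      rw [dist_eq_norm, dist_eq_norm, ← ContinuousLinearMap.sub_comp, mul_comm]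
      exact ((g - h).opNorm_comp_le (T i)).trans
        (by gcongr; exact (hC i).trans (Real.le_coe_toNNReal C))
  exact ((LipschitzWith.uniformEquicontinuous _ _ hlip).equicontinuous).isClosed_setOfPred_tendsto
    continuous_id

theorem convex_setOf_tendsto_comp {E F ι : Type*} [SeminormedAddCommGroup E] [NormedSpace ℝ E]
    [SeminormedAddCommGroup F] [NormedSpace ℝ F] {T : ι → E →L[ℝ] E} {l : Filter ι} :
    Convex ℝ {g : E →L[ℝ] F | Tendsto (fun i => g.comp (T i)) l (𝓝 g)} := by
  intro g hg h hh a b _ _ _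
  simpa only [Set.mem_ofPred_eq, ContinuousLinearMap.add_comp, ContinuousLinearMap.smul_comp]
    using (hg.const_smul a).add (hh.const_smul b)

theorem WeakConv.mem_closure_convexHull_range {Z : Type*} [SeminormedAddCommGroup Z]
    [NormedSpace ℝ Z] {f : ℕ → Z} {g : Z} (h : WeakConv Z f g) :
    g ∈ closure (convexHull ℝ (Set.range f)) := by
  by_contra hg
  obtain ⟨φ, u, hlt, hgt⟩ :=
    geometric_hahn_banach_closed_point (convex_convexHull ℝ _).closure isClosed_closure hg
  have hle : ∀ n, φ (f n) ≤ u := fun n =>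
    (hlt _ (subset_closure (subset_convexHull ℝ _ (Set.mem_range_self n)))).le
  exact hgt.not_ge (le_of_tendsto (h φ) (Eventually.of_forall hle))

theorem adjoint_schauderDecomposition_of_grothendieck_general (X : Type*)
    [NormedAddCommGroup X] [NormedSpace ℝ X] [CompleteSpace X]
    (hX : IsGrothendieck X)
    (P : ℕ → X →L[ℝ] X)
    (horth : ∀ i j, i ≠ j → (P i).comp (P j) = 0)
    (hdecomp : ∀ x : X, Tendsto (fun n => ∑ i ∈ Finset.range n, P i x) atTop (𝓝 x)) :
    ∀ f : X →L[ℝ] ℝ,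
      Tendsto (fun n => f.comp (∑ i ∈ Finset.range n, P i)) atTop (𝓝 f) := by
  intro f
  set S : ℕ → X →L[ℝ] X := fun n => ∑ i ∈ range n, P i
  have hS : ∀ x, Tendsto (fun n => S n x) atTop (𝓝 x) := by
    simpa only [S, _root_.sum_apply] using hdecomp
  obtain ⟨C, hC⟩ := exists_forall_opNorm_le_of_tendsto hS
  have hweak : WeakConv _ (fun n => f.comp (S n)) f :=
    hX _ _ fun x => (f.continuous.tendsto x).comp (hS x)
  have hfixed : ∀ m, Tendsto (fun n => (f.comp (S m)).comp (S n)) atTop (𝓝 (f.comp (S m))) :=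
    fun m => tendsto_const_nhds.congr' <| by
      filter_upwards [eventually_ge_atTop m] with n hn
      rw [ContinuousLinearMap.comp_assoc, sum_range_comp_sum_range_of_le horth
        (comp_self_of_tendsto_sum_range horth hdecomp) hn]
  have hclosed := isClosed_setOf_tendsto_comp (F := ℝ) (l := atTop) hC
  have hconv := convex_setOf_tendsto_comp (F := ℝ) (l := atTop) (T := S)
  exact closure_minimal (convexHull_min (Set.range_subset_iff.2 hfixed) hconv) hclosed
    hweak.mem_closure_convexHull_range

/-- If `(P i)` is a Schauder decomposition of a Grothendieck space `X`, then the adjoint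
projections form a Schauder decomposition of `X*`: the adjoints of the partial sums
converge to the identity in the strong (here: norm, pointwise on `X*`) sense. -/
theorem adjoint_schauderDecomposition_of_grothendieck (X : Type*)
    [NormedAddCommGroup X] [NormedSpace ℝ X] [CompleteSpace X]
    (hX : IsGrothendieck X)
    (P : ℕ → X →L[ℝ] X)
    (hne : ∀ i, P i ≠ 0)
    (horth : ∀ i j, i ≠ j → (P i).comp (P j) = 0)
    (hdecomp : ∀ x : X, Tendsto (fun n => ∑ i ∈ Finset.range n, P i x) atTop (𝓝 x)) :
    ∀ f : X →L[ℝ] ℝ,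
      Tendsto (fun n => f.comp (∑ i ∈ Finset.range n, P i)) atTop (𝓝 f) :=
  adjoint_schauderDecomposition_of_grothendieck_general X hX P horth hdecomp
end

section
/- If X is a Grothendieck Banach space and M is a closed subspace of X such that X/M is separable, then M is a Grothendieck space. -/
open Filter Topology ZeroAtInfty

/-! The heart is a sequential form of Sobczyk's theorem: a bounded weak*-null sequence in `M*`
has weak*-null extensions to `X`. Starting from Hahn–Banach extensions `H' n`, every weak*
cluster point of `(H' n)` annihilates `M`. Lifting a dense sequence of `X/M` to points `z k`, the
seminorm `F ↦ ∑ 2⁻ᵏ |F (z k)|` is weak*-continuous on bounded sets, so a compactness argument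
yields bounded functionals `G n` annihilating `M` with `H' n - G n → 0` at every `z k`. Being
bounded and null on `M` and at every `z k`, hence on a dense set, the extensions `H' n - G n` are
weak*-null. The Grothendieck property of `X` makes them weakly null, and restricting to `M` makes
the original sequence weakly null. -/

lemma exists_seq_mem_tendsto_zero_of_eventually_exists_lt {α : Type*} {s : Set α}
    (hs : s.Nonempty) {P : ℕ → α → ℝ} (hP : ∀ n a, 0 ≤ P n a)
    (h : ∀ ε > 0, ∀ᶠ n in atTop, ∃ a ∈ s, P n a < ε) :
    ∃ a : ℕ → α, (∀ n, a n ∈ s) ∧ Tendsto (fun n ↦ P n (a n)) atTop (𝓝 0) := by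
  have hinf : ∀ n, ∃ a ∈ s, P n a < sInf (P n '' s) + 1 / (n + 1) := fun n ↦ by
    obtain ⟨_, ⟨a, ha, rfl⟩, hlt⟩ :=
      Real.lt_sInf_add_pos (hs.image (P n)) (Nat.one_div_pos_of_nat (α := ℝ))
    exact ⟨a, ha, hlt⟩
  choose a has hlt using hinf
  refine ⟨a, has, tendsto_order.2 ⟨fun ε hε ↦ .of_forall fun n ↦ hε.trans_le (hP n _),
    fun ε hε ↦ ?_⟩⟩
  filter_upwards [h (ε / 2) (half_pos hε),
    (tendsto_order.1 tendsto_one_div_add_atTop_nhds_zero_nat).2 _ (half_pos hε)]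
    with n ⟨b, hb, hPb⟩ hn
  have hbdd : BddBelow (P n '' s) := ⟨0, by rintro _ ⟨c, -, rfl⟩; exact hP n c⟩
  have := csInf_le hbdd (Set.mem_image_of_mem (P n) hb)
  linarith [hlt n]

lemma tendsto_apply_of_dense {𝕜 E F ι : Type*} [NontriviallyNormedField 𝕜]
    [SeminormedAddCommGroup E] [NormedSpace 𝕜 E] [NormedAddCommGroup F] [NormedSpace 𝕜 F]
    {H : ι → E →L[𝕜] F} {C : ℝ} (hHC : ∀ i, ‖H i‖ ≤ C) {l : Filter ι} {T : E →L[𝕜] F}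
    {D : Set E} (hD : Dense D) (hDT : ∀ x ∈ D, Tendsto (fun i ↦ H i x) l (𝓝 (T x))) (x : E) :
    Tendsto (fun i ↦ H i x) l (𝓝 (T x)) := by
  have hequi : Equicontinuous ((↑) ∘ H : ι → E → F) :=
    ((NormedSpace.equicontinuous_TFAE H).out 5 1).1 (⟨C, hHC⟩ : ∃ C, ∀ i, ‖H i‖ ≤ C)
  have hclosed := hequi.isClosed_setOfPred_tendsto (l := l) T.continuous
  exact hclosed.closure_subset_iff.2 hDT (hD.closure_eq ▸ Set.mem_univ x)

section Sobczyk

variable {X : Type*} [NormedAddCommGroup X] [NormedSpace ℝ X] {z : ℕ → X}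

noncomputable def seqSeminorm (z : ℕ → X) (F : StrongDual ℝ X) : ℝ :=
  ∑' k, (1 / 2 : ℝ) ^ k * |F (z k)|

lemma pow_mul_abs_apply_le (hz : ∀ k, ‖z k‖ ≤ 1) (F : StrongDual ℝ X) (k : ℕ) :
    (1 / 2 : ℝ) ^ k * |F (z k)| ≤ (1 / 2 : ℝ) ^ k * ‖F‖ := by
  gcongr
  simpa using F.le_of_opNorm_le_of_le le_rfl (hz k)

lemma summable_pow_mul_abs_apply (hz : ∀ k, ‖z k‖ ≤ 1) (F : StrongDual ℝ X) :
    Summable fun k ↦ (1 / 2 : ℝ) ^ k * |F (z k)| :=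
  .of_nonneg_of_le (fun _ ↦ by positivity) (pow_mul_abs_apply_le hz F)
    (summable_geometric_two.mul_right _)

lemma seqSeminorm_nonneg (F : StrongDual ℝ X) : 0 ≤ seqSeminorm z F :=
  tsum_nonneg fun _ ↦ by positivity

lemma pow_mul_abs_apply_le_seqSeminorm (hz : ∀ k, ‖z k‖ ≤ 1) (F : StrongDual ℝ X) (k : ℕ) :
    (1 / 2 : ℝ) ^ k * |F (z k)| ≤ seqSeminorm z F :=
  (summable_pow_mul_abs_apply hz F).le_tsum k fun _ _ ↦ by positivity

lemma continuousOn_seqSeminorm_sub (hz : ∀ k, ‖z k‖ ≤ 1) (F : StrongDual ℝ X) (R : ℝ) :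
    ContinuousOn (fun G : WeakDual ℝ X ↦ seqSeminorm z (WeakDual.toStrongDual G - F))
      {G | ‖WeakDual.toStrongDual G - F‖ ≤ R} := by
  refine continuousOn_tsum (u := fun k ↦ (1 / 2 : ℝ) ^ k * R) (fun k ↦ ?_)
    (summable_geometric_two.mul_right _) fun k G hG ↦ ?_
  · exact ((((WeakDual.eval_continuous (z k)).sub continuous_const).abs).const_mul _).continuousOn
  · rw [Real.norm_of_nonneg (by positivity)]
    exact (pow_mul_abs_apply_le hz _ k).trans (by gcongr; exact hG)

lemma tendsto_apply_of_tendsto_seqSeminorm (hz : ∀ k, ‖z k‖ ≤ 1) {H : ℕ → StrongDual ℝ X}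
    (hH : Tendsto (fun n ↦ seqSeminorm z (H n)) atTop (𝓝 0)) (k : ℕ) :
    Tendsto (fun n ↦ H n (z k)) atTop (𝓝 0) := by
  have hweighted : Tendsto (fun n ↦ (1 / 2 : ℝ) ^ k * |H n (z k)|) atTop (𝓝 0) :=
    squeeze_zero (fun _ ↦ by positivity) (fun n ↦ pow_mul_abs_apply_le_seqSeminorm hz _ k) hH
  have habs := (hweighted.const_mul (2 ^ k)).congr fun n ↦ by
    rw [← mul_assoc, ← mul_pow, mul_one_div_cancel two_ne_zero, one_pow, one_mul]
  exact (tendsto_zero_iff_abs_tendsto_zero _).2 (by simpa [Function.comp_def] using habs)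

lemma eventually_exists_annihilator_seqSeminorm_sub_lt (hz : ∀ k, ‖z k‖ ≤ 1)
    (M : Submodule ℝ X) {H : ℕ → StrongDual ℝ X} {C : ℝ} (hHC : ∀ n, ‖H n‖ ≤ C)
    (hHM : ∀ m ∈ M, Tendsto (fun n ↦ H n m) atTop (𝓝 0)) {ε : ℝ} (hε : 0 < ε) :
    ∀ᶠ n in atTop, ∃ G : StrongDual ℝ X, ‖G‖ ≤ C ∧ (∀ m ∈ M, G m = 0) ∧
      seqSeminorm z (H n - G) < ε := by
  by_contra hbad
  set bad := {n | ¬ ∃ G : StrongDual ℝ X, ‖G‖ ≤ C ∧ (∀ m ∈ M, G m = 0) ∧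
      seqSeminorm z (H n - G) < ε}
  have : (atTop ⊓ 𝓟 bad).NeBot := frequently_iff_neBot.1 (not_eventually.1 hbad)
  obtain ⟨F, hFC, hFH⟩ :=
    (WeakDual.isCompact_closedBall (𝕜 := ℝ) 0 C).exists_mapClusterPt_of_frequently
      (l := atTop ⊓ 𝓟 bad) (f := fun n ↦ StrongDual.toWeakDual (H n))
      (.of_forall fun n ↦ by simpa using hHC n)
  set F' := WeakDual.toStrongDual F
  have hF'C : ‖F'‖ ≤ C := by simpa using hFC
  have hF'M : ∀ m ∈ M, F' m = 0 := fun m hm ↦ eq_of_nhds_neBot <|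
    (hFH.continuousAt_comp (WeakDual.eval_continuous m).continuousAt).clusterPt.mono
      ((hHM m hm).mono_left inf_le_left)
  have hnear : ∀ᶠ G in 𝓝[{G | ‖WeakDual.toStrongDual G - F'‖ ≤ 2 * C}] F,
      seqSeminorm z (WeakDual.toStrongDual G - F') < ε := by
    refine (continuousOn_seqSeminorm_sub hz F' (2 * C) F ?_).eventually (gt_mem_nhds ?_)
    · show ‖F' - F'‖ ≤ 2 * C
      rw [sub_self, norm_zero]
      linarith [norm_nonneg F']
    · simpa [F', seqSeminorm] using hε
  obtain ⟨U, hUo, hFU, hUsub⟩ := mem_nhdsWithin.1 hnear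
  obtain ⟨n, hnU, hn⟩ := ((mapClusterPt_iff_frequently.1 hFH U (hUo.mem_nhds hFU)).and_eventually
    (le_principal_iff.1 inf_le_right : ∀ᶠ n in atTop ⊓ 𝓟 bad, n ∈ bad)).exists
  refine hn ⟨F', hF'C, hF'M, hUsub ⟨hnU, ?_⟩⟩
  calc ‖H n - F'‖ ≤ ‖H n‖ + ‖F'‖ := norm_sub_le _ _
    _ ≤ 2 * C := by linarith [hHC n]

theorem exists_extension_tendsto_zero (M : Submodule ℝ X)
    [TopologicalSpace.SeparableSpace (X ⧸ M)] {h : ℕ → StrongDual ℝ M} {C : ℝ}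
    (hhC : ∀ n, ‖h n‖ ≤ C) (hh : ∀ m, Tendsto (fun n ↦ h n m) atTop (𝓝 0)) :
    ∃ H : ℕ → StrongDual ℝ X, (∀ n (m : M), H n m = h n m) ∧
      ∀ x, Tendsto (fun n ↦ H n x) atTop (𝓝 0) := by
  choose H' hH'h hH'norm using fun n ↦ exists_extension_norm_eq M (h n)
  have hH'C : ∀ n, ‖H' n‖ ≤ C := fun n ↦ (hH'norm n).trans_le (hhC n)
  have hH'M : ∀ m ∈ M, Tendsto (fun n ↦ H' n m) atTop (𝓝 0) := fun m hm ↦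
    (hh ⟨m, hm⟩).congr fun n ↦ (hH'h n ⟨m, hm⟩).symm
  obtain ⟨u, hu⟩ := TopologicalSpace.exists_dense_seq (X ⧸ M)
  choose y hy using fun k ↦ Submodule.Quotient.mk_surjective M (u k)
  set z : ℕ → X := fun k ↦ (1 + ‖y k‖)⁻¹ • y k
  have hz : ∀ k, ‖z k‖ ≤ 1 := fun k ↦ by
    rw [norm_smul, norm_inv, Real.norm_of_nonneg (by positivity), inv_mul_le_iff₀ (by positivity)]
    linarith
  obtain ⟨G, hG, hG0⟩ := exists_seq_mem_tendsto_zero_of_eventually_exists_lt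
    (s := {G : StrongDual ℝ X | ‖G‖ ≤ C ∧ ∀ m ∈ M, G m = 0})
    ⟨0, by simpa using (norm_nonneg (h 0)).trans (hhC 0)⟩
    (fun n G ↦ seqSeminorm_nonneg (H' n - G))
    fun ε hε ↦ (eventually_exists_annihilator_seqSeminorm_sub_lt hz M hH'C hH'M hε).mono
      fun n ⟨G, hGC, hGM, hGε⟩ ↦ ⟨G, ⟨hGC, hGM⟩, hGε⟩
  set H : ℕ → StrongDual ℝ X := fun n ↦ H' n - G n
  have hHh : ∀ n (m : M), H n m = h n m := fun n m ↦ by simp [H, hH'h, (hG n).2 m m.2]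
  refine ⟨H, hHh, tendsto_apply_of_dense (C := C + C) (fun n ↦ (norm_sub_le _ _).trans
    (add_le_add (hH'C n) (hG n).1)) (T := 0) (hu.preimage M.isOpenQuotientMap_mkQ.isOpenMap) ?_⟩
  rintro x ⟨k, hk⟩
  have hxy : x - y k ∈ M := (Submodule.Quotient.eq M).1 (by simpa [hy] using hk.symm)
  have hHxy : Tendsto (fun n ↦ H n (x - y k)) atTop (𝓝 0) :=
    (hh ⟨_, hxy⟩).congr fun n ↦ (hHh n ⟨_, hxy⟩).symm
  have hx : x = (x - y k) + (1 + ‖y k‖) • z k := by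
    simp [z, smul_smul, mul_inv_cancel₀ (by positivity : (1 + ‖y k‖) ≠ 0)]
  rw [hx]
  simpa only [map_add, map_smul, smul_eq_mul, mul_zero, add_zero, zero_apply] using
    hHxy.add ((tendsto_apply_of_tendsto_seqSeminorm hz hG0 k).const_mul (1 + ‖y k‖))

end Sobczyk

lemma WeakConv.map {Z W : Type*} [SeminormedAddCommGroup Z] [NormedSpace ℝ Z]
    [SeminormedAddCommGroup W] [NormedSpace ℝ W] {f : ℕ → Z} {g : Z} (hfg : WeakConv Z f g)
    (T : Z →L[ℝ] W) : WeakConv W (T ∘ f) (T g) :=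
  fun φ ↦ hfg (φ.comp T)

lemma isGrothendieck_of_weakStarConv_zero {Y : Type*} [SeminormedAddCommGroup Y]
    [NormedSpace ℝ Y]
    (h : ∀ f : ℕ → Y →L[ℝ] ℝ, WeakStarConv Y f 0 → WeakConv (Y →L[ℝ] ℝ) f 0) :
    IsGrothendieck Y := by
  intro f g hfg φ
  have hnull := h (fun n ↦ f n - g) fun y ↦ by
    simpa using (hfg y).sub_const (g y)
  simpa using (hnull φ).add_const (φ g)

/-- If `X` is Grothendieck and `M` is a closed subspace with `X/M` separable,
then `M` is Grothendieck. -/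
theorem grothendieck_subspace_of_separable_quotient (X : Type*)
    [NormedAddCommGroup X] [NormedSpace ℝ X] [CompleteSpace X]
    (hX : IsGrothendieck X) (M : Submodule ℝ X) (hM : IsClosed (M : Set X))
    (hsep : TopologicalSpace.SeparableSpace (X ⧸ M)) :
    IsGrothendieck M := by
  refine isGrothendieck_of_weakStarConv_zero fun h hh ↦ ?_
  have : CompleteSpace M := hM.completeSpace_coe
  obtain ⟨C, hC⟩ := banach_steinhaus fun m ↦ (hh m).norm.bddAbove_range.imp fun _ hC n ↦
    hC (Set.mem_range_self n)
  obtain ⟨H, hHh, hH0⟩ := exists_extension_tendsto_zero M hC fun m ↦ by simpa using hh m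
  set restrict := (ContinuousLinearMap.compL ℝ M X ℝ).flip M.subtypeL
  have hrestrict : restrict ∘ H = h := by
    ext n m
    exact hHh n m
  have := (hX H 0 fun x ↦ by simpa using hH0 x).map restrict
  rwa [map_zero, hrestrict] at this
end

section
/- Let E be a reflexive Banach space with a 1-unconditional normalized basis (e_γ)_{γ∈Γ} and let (X_γ)_{γ∈Γ} be Banach spaces. Then the E-direct sum (⊕_{γ∈Γ} X_γ)_E is a Grothendieck space if and only if each X_γ is a Grothendieck space. -/
/-!
Each `X γ` is a retract of `D` (coordinate projection and embedding), and the Grothendieck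
property passes to retracts.

Conversely, let `hₙ → 0` weak* in `D*` and `φ ∈ D**`, with components `φ_γ ∈ X γ**`. Reflexivity
of `E` makes its basis boundedly complete, so `w = ∑ γ, ‖φ_γ‖ e γ` converges in `E`, and
shrinking, so every `ψ ∈ D*` is the norm limit of its restrictions `ψ ∘ P_F` to finitely many
coordinates. Pairing `φ` against `ψ - ψ ∘ P_F` coordinatewise then gives
`|φ ψ - φ (ψ ∘ P_F)| ≤ ‖ψ‖ ‖w - ∑ γ ∈ F, ‖φ_γ‖ e γ‖`, uniformly small in `ψ = hₙ` by
Banach–Steinhaus, while `φ (hₙ ∘ P_F) = ∑ γ ∈ F, φ_γ (hₙ ∘ J_γ) → 0` because each `X γ` is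
Grothendieck.
-/

open Filter Topology ZeroAtInfty

open NormedSpace
open scoped Classical

theorem exists_norm_le_one_lt_apply {X : Type*} [NormedAddCommGroup X] [NormedSpace ℝ X]
    (f : StrongDual ℝ X) {r : ℝ} (hr : r < ‖f‖) : ∃ x : X, ‖x‖ ≤ 1 ∧ r < f x := by
  obtain ⟨x, hx, hrx⟩ := f.exists_lt_apply_of_lt_opNorm hr
  rcases lt_abs.mp hrx with h | h
  · exact ⟨x, hx.le, h⟩
  · exact ⟨-x, by simpa using hx.le, by simpa using h⟩

theorem sum_mul_norm_le_of_forall {ι : Type*} {X : ι → Type*} [∀ i, NormedAddCommGroup (X i)]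
    [∀ i, NormedSpace ℝ (X i)] (T : Finset ι) {w : ι → ℝ} (hw : ∀ i, 0 ≤ w i)
    (f : ∀ i, StrongDual ℝ (X i)) {B : ℝ}
    (h : ∀ x : ∀ i, X i, (∀ i, ‖x i‖ ≤ 1) → ∑ i ∈ T, w i * f i (x i) ≤ B) :
    ∑ i ∈ T, w i * ‖f i‖ ≤ B := by
  refine le_of_forall_pos_lt_add fun ε hε => ?_
  have hW : 0 ≤ ∑ i ∈ T, w i := Finset.sum_nonneg fun i _ => hw i
  set η := ε / (∑ i ∈ T, w i + 1)
  have hηε : η * ∑ i ∈ T, w i < ε := by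
    rw [div_mul_eq_mul_div, div_lt_iff₀ (by positivity)]
    nlinarith
  choose x hx1 hx2 using fun i => exists_norm_le_one_lt_apply (f i)
    (sub_lt_self ‖f i‖ (div_pos hε (by positivity) : 0 < η))
  calc ∑ i ∈ T, w i * ‖f i‖ = ∑ i ∈ T, w i * (‖f i‖ - η) + η * ∑ i ∈ T, w i := by
        rw [Finset.mul_sum, ← Finset.sum_add_distrib]
        exact Finset.sum_congr rfl fun i _ => by ring
    _ ≤ ∑ i ∈ T, w i * f i (x i) + η * ∑ i ∈ T, w i := by
        gcongr with i
        exacts [hw i, (hx2 i).le]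
    _ < B + ε := add_lt_add_of_le_of_lt (h x hx1) hηε

theorem exists_hasSum_apply_of_sum_abs_le {Γ V : Type*} [SeminormedAddCommGroup V]
    [NormedSpace ℝ V] (f : Γ → StrongDual ℝ V) {C : ℝ}
    (hf : ∀ (v : V) (T : Finset Γ), ∑ γ ∈ T, |f γ v| ≤ C * ‖v‖) :
    ∃ g : StrongDual ℝ V, ∀ v, HasSum (fun γ => f γ v) (g v) := by
  have habs : ∀ v, Summable fun γ => |f γ v| :=
    fun v => summable_of_sum_le (fun γ => abs_nonneg _) (hf v)
  have hs : ∀ v, Summable fun γ => f γ v := fun v => (habs v).of_abs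
  let g : V →ₗ[ℝ] ℝ :=
    { toFun := fun v => ∑' γ, f γ v
      map_add' := fun v w => by simp only [map_add]; exact (hs v).tsum_add (hs w)
      map_smul' := fun r v => by
        simp only [map_smul, smul_eq_mul, RingHom.id_apply]
        exact tsum_mul_left }
  refine ⟨g.mkContinuous C fun v => ?_, fun v => (hs v).hasSum⟩
  calc ‖∑' γ, f γ v‖ ≤ ∑' γ, |f γ v| := norm_tsum_le_tsum_norm (habs v)
    _ ≤ C * ‖v‖ := (habs v).tsum_le_of_sum_le (hf v)

theorem exists_forall_mapClusterPt_apply {E : Type*} [NormedAddCommGroup E] [NormedSpace ℝ E]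
    (hrefl : Function.Surjective (inclusionInDoubleDual ℝ E)) {α : Type*} {l : Filter α}
    [l.NeBot] {u : α → E} {C : ℝ} (hu : ∀ a, ‖u a‖ ≤ C) :
    ∃ v : E, ∀ ζ : StrongDual ℝ E, MapClusterPt (ζ v) l fun a => ζ (u a) := by
  let U : α → WeakDual ℝ (StrongDual ℝ E) := fun a => inclusionInDoubleDual ℝ E (u a)
  have hU : ∀ a, U a ∈ WeakDual.toStrongDual ⁻¹' Metric.closedBall 0 C := fun a => by
    change dist (inclusionInDoubleDual ℝ E (u a)) 0 ≤ C
    exact (dist_zero_right (inclusionInDoubleDual ℝ E (u a))).trans_le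
      ((double_dual_bound ℝ E (u a)).trans (hu a))
  obtain ⟨Φ, -, hΦ⟩ := (WeakDual.isCompact_closedBall (0 : StrongDual ℝ (StrongDual ℝ E)) C)
    |>.exists_clusterPt (f := map U l) (le_principal_iff.mpr (mem_map.mpr (univ_mem' hU)))
  obtain ⟨v, hv⟩ := hrefl (WeakDual.toStrongDual Φ)
  refine ⟨v, fun ζ => ?_⟩
  rw [show ζ v = Φ ζ from congrArg (fun Ψ : StrongDual ℝ (StrongDual ℝ E) => Ψ ζ) hv]
  exact MapClusterPt.continuousAt_comp (WeakDual.eval_continuous ζ).continuousAt hΦ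

theorem tendsto_zero_of_forall_abs_sub_le {α : Type*} {l : Filter α} {f : α → ℝ}
    (h : ∀ ε > 0, ∃ g : α → ℝ, Tendsto g l (𝓝 0) ∧ ∀ a, |f a - g a| ≤ ε) :
    Tendsto f l (𝓝 0) := by
  refine Metric.tendsto_nhds.mpr fun ε hε => ?_
  obtain ⟨g, hg, hfg⟩ := h (ε / 2) (half_pos hε)
  filter_upwards [Metric.tendsto_nhds.mp hg (ε / 2) (half_pos hε)] with a ha
  rw [Real.dist_eq, sub_zero] at ha ⊢
  linarith [abs_sub_abs_le_abs_sub (f a) (g a), hfg a]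

theorem isGrothendieck_of_tendsto_zero {X : Type*} [SeminormedAddCommGroup X] [NormedSpace ℝ X]
    (h : ∀ f : ℕ → StrongDual ℝ X, (∀ x, Tendsto (fun n => f n x) atTop (𝓝 0)) →
      ∀ φ : StrongDual ℝ (StrongDual ℝ X), Tendsto (fun n => φ (f n)) atTop (𝓝 0)) :
    IsGrothendieck X := by
  intro f g hfg φ
  have hnull := h (fun n => f n - g) (fun x => by simpa using (hfg x).sub_const (g x)) φ
  simpa using hnull.add_const (φ g)

theorem IsGrothendieck.of_retract {X Y : Type*} [SeminormedAddCommGroup X] [NormedSpace ℝ X]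
    [SeminormedAddCommGroup Y] [NormedSpace ℝ Y] (hY : IsGrothendieck Y) (P : Y →L[ℝ] X)
    (J : X →L[ℝ] Y) (hPJ : ∀ x, P (J x) = x) : IsGrothendieck X := by
  intro f g hfg φ
  have hJ : ∀ k : StrongDual ℝ X, (k ∘L P) ∘L J = k := fun k => by ext x; simp [hPJ]
  simpa [hJ] using hY (fun n => f n ∘L P) (g ∘L P) (fun y => hfg (P y))
    (φ ∘L ContinuousLinearMap.precomp ℝ J)

theorem hasSum_ite_smul_sum {Γ R M : Type*} [Semiring R] [AddCommMonoid M] [TopologicalSpace M]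
    [Module R M] {e : Γ → M} (T : Finset Γ) (a : Γ → R) :
    HasSum (fun γ => (if γ ∈ T then a γ else 0) • e γ) (∑ γ ∈ T, a γ • e γ) := by
  convert hasSum_sum_of_ne_finset_zero (L := SummationFilter.unconditional Γ)
    (f := fun γ => (if γ ∈ T then a γ else 0) • e γ) (s := T) fun γ hγ => by simp [hγ] using 1
  exact Finset.sum_congr rfl fun γ hγ => by simp [hγ]

theorem HasSum.ite_notMem_smul {Γ R M : Type*} [Ring R] [AddCommGroup M] [TopologicalSpace M]
    [IsTopologicalAddGroup M] [Module R M] {e : Γ → M} {a : Γ → R} {v : M}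
    (hv : HasSum (fun γ => a γ • e γ) v) (F : Finset Γ) :
    HasSum (fun γ => (if γ ∈ F then 0 else a γ) • e γ) (v - ∑ γ ∈ F, a γ • e γ) := by
  convert hv.sub (hasSum_ite_smul_sum F a) using 1
  funext γ
  by_cases hγ : γ ∈ F <;> simp [hγ]

section OneUnconditional

variable {Γ E : Type*} [NormedAddCommGroup E] [NormedSpace ℝ E]

def IsOneUnconditional (e : Γ → E) : Prop :=
  ∀ (a ε : Γ → ℝ) (v w : E), (∀ γ, |ε γ| = 1) →
    HasSum (fun γ => a γ • e γ) v → HasSum (fun γ => (ε γ * a γ) • e γ) w → ‖w‖ = ‖v‖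

variable {e : Γ → E}

namespace IsOneUnconditional

variable (hunc : IsOneUnconditional e)
include hunc

theorem norm_sum_mul_eq (T : Finset Γ) (a ε : Γ → ℝ) (hε : ∀ γ, |ε γ| = 1) :
    ‖∑ γ ∈ T, (ε γ * a γ) • e γ‖ = ‖∑ γ ∈ T, a γ • e γ‖ := by
  refine hunc (fun γ => if γ ∈ T then a γ else 0) ε _ _ hε (hasSum_ite_smul_sum T a) ?_
  convert hasSum_ite_smul_sum T (fun γ => ε γ * a γ) using 2 with γ
  by_cases hγ : γ ∈ T <;> simp [hγ]

/-- Shrinking one coefficient is a convex combination of the expansion and of its sign flip at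
that coordinate, which has the same norm. -/
theorem norm_sum_update_mul_le (T : Finset Γ) (a : Γ → ℝ) (i : Γ) {s : ℝ} (hs : |s| ≤ 1) :
    ‖∑ γ ∈ T, (Function.update (1 : Γ → ℝ) i s γ * a γ) • e γ‖ ≤ ‖∑ γ ∈ T, a γ • e γ‖ := by
  obtain ⟨hs₁, hs₂⟩ := abs_le.mp hs
  set σ : Γ → ℝ := Function.update (1 : Γ → ℝ) i (-1)
  have hσ : ∀ γ, |σ γ| = 1 := fun γ => by
    by_cases h : γ = i <;> simp [σ, h]
  have hsplit : ∑ γ ∈ T, (Function.update (1 : Γ → ℝ) i s γ * a γ) • e γ =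
      ((1 + s) / 2) • ∑ γ ∈ T, a γ • e γ + ((1 - s) / 2) • ∑ γ ∈ T, (σ γ * a γ) • e γ := by
    simp only [Finset.smul_sum, smul_smul, ← Finset.sum_add_distrib, ← add_smul]
    refine Finset.sum_congr rfl fun γ _ => ?_
    by_cases h : γ = i <;> simp only [σ, Function.update_apply, h, if_true, if_false,
      Pi.one_apply] <;> ring_nf
  calc _ ≤ (1 + s) / 2 * ‖∑ γ ∈ T, a γ • e γ‖ + (1 - s) / 2 * ‖∑ γ ∈ T, (σ γ * a γ) • e γ‖ := by
        rw [hsplit]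
        refine (norm_add_le _ _).trans (add_le_add ?_ ?_) <;>
          rw [norm_smul, Real.norm_of_nonneg (by linarith)]
    _ = ‖∑ γ ∈ T, a γ • e γ‖ := by rw [hunc.norm_sum_mul_eq T a σ hσ]; ring

theorem norm_sum_mul_le (T : Finset Γ) (a t : Γ → ℝ) (ht : ∀ γ ∈ T, |t γ| ≤ 1) :
    ‖∑ γ ∈ T, (t γ * a γ) • e γ‖ ≤ ‖∑ γ ∈ T, a γ • e γ‖ := by
  suffices key : ∀ S : Finset Γ, ∀ t : Γ → ℝ, (∀ γ, |t γ| ≤ 1) → (∀ γ ∉ S, t γ = 1) →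
      ‖∑ γ ∈ T, (t γ * a γ) • e γ‖ ≤ ‖∑ γ ∈ T, a γ • e γ‖ by
    have hT : ∑ γ ∈ T, (t γ * a γ) • e γ = ∑ γ ∈ T, ((if γ ∈ T then t γ else 1) * a γ) • e γ :=
      Finset.sum_congr rfl fun γ hγ => by rw [if_pos hγ]
    rw [hT]
    exact key T _ (fun γ => by split_ifs <;> simp [*]) (fun γ hγ => if_neg hγ)
  intro S
  induction S using Finset.induction_on with
  | empty => intro t _ ht1; simp [ht1]
  | insert i S hi ih =>
    intro t ht ht1
    set t' := Function.update t i 1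
    have hmul : ∀ γ, t γ * a γ = Function.update (1 : Γ → ℝ) i (t i) γ * (t' γ * a γ) := fun γ => by
      by_cases h : γ = i <;> simp [t', h]
    calc _ = ‖∑ γ ∈ T, (Function.update (1 : Γ → ℝ) i (t i) γ * (t' γ * a γ)) • e γ‖ := by
          simp_rw [hmul]
      _ ≤ ‖∑ γ ∈ T, (t' γ * a γ) • e γ‖ := hunc.norm_sum_update_mul_le T _ i (ht i)
      _ ≤ _ := ih t' (fun γ => by by_cases h : γ = i <;> simp [t', h, ht γ])
          (fun γ hγ => by
            by_cases h : γ = i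
            · simp [t', h]
            · simpa [t', h] using ht1 γ (by simp [h, hγ]))

theorem norm_sum_le_of_abs_le (T : Finset Γ) {a b : Γ → ℝ} (hab : ∀ γ ∈ T, |a γ| ≤ |b γ|) :
    ‖∑ γ ∈ T, a γ • e γ‖ ≤ ‖∑ γ ∈ T, b γ • e γ‖ := by
  have hb : ∀ γ ∈ T, a γ = a γ / b γ * b γ := fun γ hγ => by
    by_cases h : b γ = 0
    · simpa [h] using hab γ hγ
    · field_simp
  calc _ = ‖∑ γ ∈ T, (a γ / b γ * b γ) • e γ‖ := by
        congr 1; exact Finset.sum_congr rfl fun γ hγ => by rw [← hb γ hγ]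
    _ ≤ _ := hunc.norm_sum_mul_le T b _ fun γ hγ => by
        rw [abs_div]; exact div_le_one_of_le₀ (hab γ hγ) (abs_nonneg _)

theorem norm_sum_le_of_subset (a : Γ → ℝ) {S T : Finset Γ} (hST : S ⊆ T) :
    ‖∑ γ ∈ S, a γ • e γ‖ ≤ ‖∑ γ ∈ T, a γ • e γ‖ := by
  calc _ = ‖∑ γ ∈ T, (if γ ∈ S then a γ else 0) • e γ‖ := by
        simp only [ite_smul, zero_smul, Finset.sum_ite_mem, Finset.inter_eq_right.mpr hST]
    _ ≤ _ := hunc.norm_sum_le_of_abs_le T fun γ _ => by split_ifs <;> simp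

theorem norm_sum_le_of_hasSum {a : Γ → ℝ} {v : E} (hv : HasSum (fun γ => a γ • e γ) v)
    (T : Finset Γ) : ‖∑ γ ∈ T, a γ • e γ‖ ≤ ‖v‖ :=
  ge_of_tendsto (Tendsto.norm (f := fun T : Finset Γ => ∑ γ ∈ T, a γ • e γ) hv)
    (eventually_atTop.mpr ⟨T, fun _ hT => hunc.norm_sum_le_of_subset a hT⟩)

theorem sum_abs_apply_mul_abs_le (ξ : StrongDual ℝ E) (T : Finset Γ) (a : Γ → ℝ) :
    ∑ γ ∈ T, |ξ (e γ)| * |a γ| ≤ ‖ξ‖ * ‖∑ γ ∈ T, a γ • e γ‖ := by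
  set s : Γ → ℝ := fun γ => if 0 ≤ ξ (e γ) then 1 else -1
  have hs : ∀ γ, |s γ| = 1 := fun γ => by simp only [s]; split_ifs <;> simp
  calc ∑ γ ∈ T, |ξ (e γ)| * |a γ| = ξ (∑ γ ∈ T, (s γ * |a γ|) • e γ) := by
        simp only [map_sum, map_smul, smul_eq_mul]
        refine Finset.sum_congr rfl fun γ _ => ?_
        simp only [s]
        split_ifs with h
        · rw [abs_of_nonneg h]; ring
        · rw [abs_of_neg (not_le.mp h)]; ring
    _ ≤ ‖ξ‖ * ‖∑ γ ∈ T, (s γ * |a γ|) • e γ‖ := (le_abs_self _).trans (ξ.le_opNorm _)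
    _ ≤ ‖ξ‖ * ‖∑ γ ∈ T, a γ • e γ‖ := by
        gcongr
        exact hunc.norm_sum_le_of_abs_le T fun γ _ => by rw [abs_mul, hs, abs_abs, one_mul]

end IsOneUnconditional

end OneUnconditional

section UnconditionalBasis

variable {Γ E : Type*} [NormedAddCommGroup E] [NormedSpace ℝ E]

def IsUnconditionalBasis (e : Γ → E) : Prop :=
  ∀ v : E, ∃! a : Γ → ℝ, HasSum (fun γ => a γ • e γ) v

namespace IsUnconditionalBasis

variable {e : Γ → E} (hbasis : IsUnconditionalBasis e)
include hbasis

noncomputable def coeff (v : E) : Γ → ℝ := (hbasis v).choose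

theorem hasSum_coeff (v : E) : HasSum (fun γ => hbasis.coeff v γ • e γ) v :=
  (hbasis v).choose_spec.1

theorem coeff_eq {a : Γ → ℝ} {v : E} (h : HasSum (fun γ => a γ • e γ) v) : hbasis.coeff v = a :=
  ((hbasis v).choose_spec.2 a h).symm

theorem coeff_sum (T : Finset Γ) (a : Γ → ℝ) :
    hbasis.coeff (∑ γ ∈ T, a γ • e γ) = fun γ => if γ ∈ T then a γ else 0 :=
  hbasis.coeff_eq (hasSum_ite_smul_sum T a)

theorem coeff_basis (i : Γ) : hbasis.coeff (e i) = fun γ => if γ = i then 1 else 0 := by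
  simpa using hbasis.coeff_sum {i} fun _ => 1

theorem eq_zero_of_coeff_eq_zero {v : E} (hv : ∀ γ, hbasis.coeff v γ = 0) : v = 0 :=
  (hbasis.hasSum_coeff v).unique (by simp [hv, hasSum_zero])

noncomputable def coeffCLM (hnorm : ∀ γ, ‖e γ‖ = 1) (hunc : IsOneUnconditional e) (γ : Γ) :
    StrongDual ℝ E :=
  LinearMap.mkContinuous
    { toFun := fun v => hbasis.coeff v γ
      map_add' := fun v w => by
        have h := (hbasis.hasSum_coeff v).add (hbasis.hasSum_coeff w)
        simp_rw [← add_smul] at h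
        exact congrFun (hbasis.coeff_eq h) γ
      map_smul' := fun r v => by
        have h := (hbasis.hasSum_coeff v).const_smul r
        simp_rw [smul_smul] at h
        exact congrFun (hbasis.coeff_eq h) γ }
    1 fun v => by
      simpa [norm_smul, hnorm] using hunc.norm_sum_le_of_hasSum (hbasis.hasSum_coeff v) {γ}

@[simp]
theorem coeffCLM_apply (hnorm : ∀ γ, ‖e γ‖ = 1) (hunc : IsOneUnconditional e) (γ : Γ) (v : E) :
    hbasis.coeffCLM hnorm hunc γ v = hbasis.coeff v γ :=
  rfl

end IsUnconditionalBasis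

end UnconditionalBasis

section Reflexive

variable {Γ E : Type*} [NormedAddCommGroup E] [NormedSpace ℝ E] {e : Γ → E}
  (hrefl : Function.Surjective (inclusionInDoubleDual ℝ E)) (hnorm : ∀ γ, ‖e γ‖ = 1)
  (hunc : IsOneUnconditional e) (hbasis : IsUnconditionalBasis e)
include hrefl hnorm hunc hbasis

/-- A reflexive space contains the weak* limit `∑ γ, c γ • e γ` of a weakly unconditionally
Cauchy series, and by uniqueness of expansions its coefficients are `c`. -/
theorem summable_smul_of_sum_abs_le (c : Γ → ℝ) {C : ℝ}
    (hc : ∀ (ξ : StrongDual ℝ E) (T : Finset Γ), ∑ γ ∈ T, |c γ * ξ (e γ)| ≤ C * ‖ξ‖) :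
    Summable fun γ => c γ • e γ := by
  obtain ⟨Φ, hΦ⟩ := exists_hasSum_apply_of_sum_abs_le
    (fun γ => c γ • inclusionInDoubleDual ℝ E (e γ)) (by simpa using hc)
  obtain ⟨v, rfl⟩ := hrefl Φ
  have hcoeff : hbasis.coeff v = c := funext fun γ => by
    have h := hΦ (hbasis.coeffCLM hnorm hunc γ)
    simp only [smul_apply, dual_def, IsUnconditionalBasis.coeffCLM_apply, hbasis.coeff_basis,
      smul_eq_mul, mul_ite, mul_one, mul_zero, eq_comm (a := γ)] at h
    simpa using h.unique (hasSum_single γ fun γ' hγ' => if_neg hγ')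
  exact ⟨v, hcoeff ▸ hbasis.hasSum_coeff v⟩

/-- Otherwise a bounded net indexed by the finite sets `F` and supported off `F` would have a
weak cluster point: all its coefficients vanish, yet `ξ` stays away from `0` on it. -/
theorem exists_finset_abs_le_of_coeff_eq_zero (ξ : StrongDual ℝ E) {ε : ℝ} (hε : 0 < ε) :
    ∃ F : Finset Γ, ∀ v, ‖v‖ ≤ 1 → (∀ γ ∈ F, hbasis.coeff v γ = 0) → |ξ v| ≤ ε := by
  by_contra! h
  choose u hu hu0 huξ using h
  obtain ⟨w, hw⟩ := exists_forall_mapClusterPt_apply hrefl (l := atTop) hu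
  have hw0 : w = 0 := hbasis.eq_zero_of_coeff_eq_zero fun γ =>
    isClosed_singleton.mem_of_mapClusterPt (hw (hbasis.coeffCLM hnorm hunc γ))
      (eventually_atTop.mpr ⟨{γ}, fun F hF => hu0 F γ (hF (Finset.mem_singleton_self γ))⟩)
  have hεw : ε ≤ |ξ w| := (isClosed_le continuous_const continuous_abs).mem_of_mapClusterPt
    (hw ξ) (Eventually.of_forall fun F => (huξ F).le)
  simp [hw0] at hεw
  linarith

end Reflexive

section EDirectSum

variable {Γ E : Type*} [NormedAddCommGroup E] [NormedSpace ℝ E] {e : Γ → E}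
  {X : Γ → Type*} [∀ γ, NormedAddCommGroup (X γ)] [∀ γ, NormedSpace ℝ (X γ)]
  {D : Type*} [NormedAddCommGroup D] [NormedSpace ℝ D]

structure IsEDirectSum (e : Γ → E) (ι : D →ₗ[ℝ] ∀ γ, X γ) : Prop where
  injective : Function.Injective ι
  summable : ∀ d, Summable fun γ => ‖ι d γ‖ • e γ
  exists_eq : ∀ x : ∀ γ, X γ, (Summable fun γ => ‖x γ‖ • e γ) → ∃ d, ι d = x
  norm_eq : ∀ d, ‖d‖ = ‖∑' γ, ‖ι d γ‖ • e γ‖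

namespace IsEDirectSum

variable {ι : D →ₗ[ℝ] ∀ γ, X γ} (hD : IsEDirectSum e ι)
  (hnorm : ∀ γ, ‖e γ‖ = 1) (hunc : IsOneUnconditional e)
include hD

include hunc in
theorem norm_sum_le (d : D) (T : Finset Γ) :
    ‖∑ γ ∈ T, ‖ι d γ‖ • e γ‖ ≤ ‖d‖ :=
  hD.norm_eq d ▸ hunc.norm_sum_le_of_hasSum (hD.summable d).hasSum T

include hnorm hunc in
theorem norm_apply_le (d : D) (γ : Γ) : ‖ι d γ‖ ≤ ‖d‖ := by
  simpa [norm_smul, hnorm] using hD.norm_sum_le hunc d {γ}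

noncomputable def proj (γ : Γ) : D →L[ℝ] X γ :=
  ((LinearMap.proj γ).comp ι).mkContinuous 1 fun d => by
    simpa using hD.norm_apply_le hnorm hunc d γ

@[simp]
theorem proj_apply (γ : Γ) (d : D) : hD.proj hnorm hunc γ d = ι d γ :=
  rfl

theorem pi_single_mem_range (γ : Γ) (x : X γ) : Pi.single γ x ∈ LinearMap.range ι :=
  hD.exists_eq _ (summable_of_ne_finset_zero (s := {γ}) fun γ' hγ' => by
    simp [Pi.single_eq_of_ne (Finset.notMem_singleton.mp hγ')])

noncomputable def singleₗ (γ : Γ) : X γ →ₗ[ℝ] D :=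
  (LinearEquiv.ofInjective ι hD.injective).symm.toLinearMap ∘ₗ
    (LinearMap.single ℝ X γ).codRestrict _ (hD.pi_single_mem_range γ)

theorem apply_singleₗ (γ : Γ) (x : X γ) : ι (hD.singleₗ γ x) = Pi.single γ x := by
  change ι ((LinearEquiv.ofInjective ι hD.injective).symm
    ⟨Pi.single γ x, hD.pi_single_mem_range γ x⟩) = _
  rw [← LinearEquiv.ofInjective_apply (h := hD.injective), LinearEquiv.apply_symm_apply]

include hnorm in
theorem norm_singleₗ (γ : Γ) (x : X γ) : ‖hD.singleₗ γ x‖ = ‖x‖ := by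
  rw [hD.norm_eq, hD.apply_singleₗ, tsum_eq_single γ fun γ' hγ' => by simp [hγ'], Pi.single_eq_same,
    norm_smul, hnorm, norm_norm, mul_one]

include hnorm in
noncomputable def single (γ : Γ) : X γ →L[ℝ] D :=
  (hD.singleₗ γ).mkContinuous 1 fun x => by rw [hD.norm_singleₗ hnorm, one_mul]

include hnorm in
theorem apply_single (γ : Γ) (x : X γ) : ι (hD.single hnorm γ x) = Pi.single γ x :=
  hD.apply_singleₗ γ x

include hnorm hunc in
theorem proj_single (γ : Γ) (x : X γ) : hD.proj hnorm hunc γ (hD.single hnorm γ x) = x := by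
  simp [hD.apply_single]

include hnorm in
theorem apply_sum_single (T : Finset Γ) (y : ∀ γ, X γ) :
    ι (∑ γ ∈ T, hD.single hnorm γ (y γ)) = fun γ => if γ ∈ T then y γ else 0 := by
  ext γ
  simp [map_sum, hD.apply_single, Finset.sum_pi_single]

include hnorm in
theorem norm_sum_single (T : Finset Γ) (y : ∀ γ, X γ) :
    ‖∑ γ ∈ T, hD.single hnorm γ (y γ)‖ = ‖∑ γ ∈ T, ‖y γ‖ • e γ‖ := by
  rw [hD.norm_eq, hD.apply_sum_single, ← (hasSum_ite_smul_sum T fun γ => ‖y γ‖).tsum_eq]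
  simp only [apply_ite norm, norm_zero]

include hnorm hunc in
noncomputable def projFinset (F : Finset Γ) : D →L[ℝ] D :=
  ∑ γ ∈ F, hD.single hnorm γ ∘L hD.proj hnorm hunc γ

include hnorm hunc in
theorem projFinset_apply (F : Finset Γ) (d : D) :
    hD.projFinset hnorm hunc F d = ∑ γ ∈ F, hD.single hnorm γ (ι d γ) := by
  simp [projFinset]

include hnorm hunc in
theorem comp_projFinset {Y : Type*} [NormedAddCommGroup Y] [NormedSpace ℝ Y] (ψ : D →L[ℝ] Y)
    (F : Finset Γ) :
    ψ ∘L hD.projFinset hnorm hunc F =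
      ∑ γ ∈ F, (ψ ∘L hD.single hnorm γ) ∘L hD.proj hnorm hunc γ := by
  ext d
  simp [hD.projFinset_apply]

include hnorm hunc in
theorem tendsto_projFinset (d : D) :
    Tendsto (fun F => hD.projFinset hnorm hunc F d) atTop (𝓝 d) := by
  have hv := (hD.summable d).hasSum
  have htail : ∀ F, ‖d - hD.projFinset hnorm hunc F d‖ =
      ‖(∑' γ, ‖ι d γ‖ • e γ) - ∑ γ ∈ F, ‖ι d γ‖ • e γ‖ := fun F => by
    rw [hD.norm_eq, ← (hv.ite_notMem_smul F).tsum_eq]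
    congr 2 with γ
    by_cases hγ : γ ∈ F <;> simp [hD.projFinset_apply, hD.apply_sum_single, hγ]
  rw [tendsto_iff_norm_sub_tendsto_zero]
  simp_rw [norm_sub_rev _ d, htail]
  simpa using ((tendsto_const_nhds (x := ∑' γ, ‖ι d γ‖ • e γ)).sub hv).norm

include hnorm hunc

theorem sum_abs_mul_norm_comp_single_le (ψ : StrongDual ℝ D) (T : Finset Γ) (c : Γ → ℝ) :
    ∑ γ ∈ T, |c γ| * ‖ψ ∘L hD.single hnorm γ‖ ≤ ‖ψ‖ * ‖∑ γ ∈ T, c γ • e γ‖ := by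
  refine sum_mul_norm_le_of_forall T (fun γ => abs_nonneg (c γ)) _ fun x hx => ?_
  calc ∑ γ ∈ T, |c γ| * (ψ ∘L hD.single hnorm γ) (x γ)
      = ψ (∑ γ ∈ T, hD.single hnorm γ (|c γ| • x γ)) := by simp
    _ ≤ ‖ψ‖ * ‖∑ γ ∈ T, hD.single hnorm γ (|c γ| • x γ)‖ := (le_abs_self _).trans (ψ.le_opNorm _)
    _ ≤ ‖ψ‖ * ‖∑ γ ∈ T, c γ • e γ‖ := by
        gcongr
        rw [hD.norm_sum_single hnorm T fun γ => |c γ| • x γ]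
        refine hunc.norm_sum_le_of_abs_le T fun γ _ => ?_
        rw [abs_norm, norm_smul, Real.norm_eq_abs, abs_abs]
        exact mul_le_of_le_one_right (abs_nonneg _) (hx γ)

noncomputable def bidualComponent (φ : StrongDual ℝ (StrongDual ℝ D)) (γ : Γ) :
    StrongDual ℝ (StrongDual ℝ (X γ)) :=
  φ ∘L ContinuousLinearMap.precomp ℝ (hD.proj hnorm hunc γ)

@[simp]
theorem bidualComponent_apply (φ : StrongDual ℝ (StrongDual ℝ D)) (γ : Γ)
    (k : StrongDual ℝ (X γ)) :
    hD.bidualComponent hnorm hunc φ γ k = φ (k ∘L hD.proj hnorm hunc γ) :=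
  rfl

theorem sum_abs_mul_norm_bidualComponent_le (φ : StrongDual ℝ (StrongDual ℝ D))
    (ξ : StrongDual ℝ E) (T : Finset Γ) :
    ∑ γ ∈ T, |ξ (e γ)| * ‖hD.bidualComponent hnorm hunc φ γ‖ ≤ ‖φ‖ * ‖ξ‖ := by
  refine sum_mul_norm_le_of_forall T (fun γ => abs_nonneg _) _ fun k hk => ?_
  set Ψ : StrongDual ℝ D := ∑ γ ∈ T, |ξ (e γ)| • (k γ ∘L hD.proj hnorm hunc γ)
  have hΨ : ‖Ψ‖ ≤ ‖ξ‖ := by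
    refine ContinuousLinearMap.opNorm_le_bound _ (norm_nonneg ξ) fun d => ?_
    calc ‖Ψ d‖ ≤ ∑ γ ∈ T, |ξ (e γ)| * |‖ι d γ‖| := by
          simp only [Ψ, sum_apply, smul_apply, ContinuousLinearMap.comp_apply,
            proj_apply, smul_eq_mul, Real.norm_eq_abs, abs_norm]
          refine (Finset.abs_sum_le_sum_abs _ _).trans (Finset.sum_le_sum fun γ _ => ?_)
          rw [abs_mul, abs_abs]
          gcongr
          simpa using (k γ).le_of_opNorm_le (hk γ) (ι d γ)
      _ ≤ ‖ξ‖ * ‖∑ γ ∈ T, ‖ι d γ‖ • e γ‖ := hunc.sum_abs_apply_mul_abs_le ξ T _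
      _ ≤ ‖ξ‖ * ‖d‖ := by gcongr; exact hD.norm_sum_le hunc d T
  calc ∑ γ ∈ T, |ξ (e γ)| * hD.bidualComponent hnorm hunc φ γ (k γ) = φ Ψ := by simp [Ψ]
    _ ≤ ‖φ‖ * ‖Ψ‖ := (le_abs_self _).trans (φ.le_opNorm _)
    _ ≤ ‖φ‖ * ‖ξ‖ := by gcongr

theorem abs_apply_projFinset_sub_le (ψ : StrongDual ℝ D) (d : D) {G H : Finset Γ} (hGH : G ⊆ H) :
    |ψ (hD.projFinset hnorm hunc H d) - ψ (hD.projFinset hnorm hunc G d)| ≤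
      ∑ γ ∈ H \ G, ‖ψ ∘L hD.single hnorm γ‖ * ‖ι d γ‖ := by
  rw [hD.projFinset_apply, hD.projFinset_apply, map_sum, map_sum, ← Finset.sum_sdiff_eq_sub hGH]
  exact (Finset.abs_sum_le_sum_abs _ _).trans
    (Finset.sum_le_sum fun γ _ => (ψ ∘L hD.single hnorm γ).le_opNorm (ι d γ))

variable (hbasis : IsUnconditionalBasis e)
include hbasis

theorem exists_apply_basis_eq_norm_comp_single (ψ : StrongDual ℝ D) :
    ∃ ξ : StrongDual ℝ E, ∀ γ, ξ (e γ) = ‖ψ ∘L hD.single hnorm γ‖ := by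
  obtain ⟨ξ, hξ⟩ := exists_hasSum_apply_of_sum_abs_le
    (fun γ => ‖ψ ∘L hD.single hnorm γ‖ • hbasis.coeffCLM hnorm hunc γ) (C := ‖ψ‖) fun v T => by
      calc ∑ γ ∈ T, |(‖ψ ∘L hD.single hnorm γ‖ • hbasis.coeffCLM hnorm hunc γ) v|
          = ∑ γ ∈ T, |hbasis.coeff v γ| * ‖ψ ∘L hD.single hnorm γ‖ := by simp [abs_mul, mul_comm]
        _ ≤ ‖ψ‖ * ‖∑ γ ∈ T, hbasis.coeff v γ • e γ‖ :=
          hD.sum_abs_mul_norm_comp_single_le hnorm hunc ψ T _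
        _ ≤ ‖ψ‖ * ‖v‖ := by gcongr; exact hunc.norm_sum_le_of_hasSum (hbasis.hasSum_coeff v) T
  refine ⟨ξ, fun γ => ?_⟩
  have h := hξ (e γ)
  simp only [smul_apply, IsUnconditionalBasis.coeffCLM_apply, hbasis.coeff_basis, smul_eq_mul,
    mul_ite, mul_one, mul_zero] at h
  simpa using h.unique (hasSum_single γ fun γ' hγ' => if_neg hγ')

variable (hrefl : Function.Surjective (inclusionInDoubleDual ℝ E))
include hrefl

theorem tendsto_comp_projFinset (ψ : StrongDual ℝ D) :
    Tendsto (fun F => ψ ∘L hD.projFinset hnorm hunc F) atTop (𝓝 ψ) := by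
  obtain ⟨ξ, hξ⟩ := hD.exists_apply_basis_eq_norm_comp_single hnorm hunc hbasis ψ
  refine Metric.tendsto_atTop.mpr fun ε hε => ?_
  obtain ⟨F, hF⟩ := exists_finset_abs_le_of_coeff_eq_zero hrefl hnorm hunc hbasis ξ (half_pos hε)
  refine ⟨F, fun G hFG => ?_⟩
  rw [dist_eq_norm]
  refine (ContinuousLinearMap.opNorm_le_of_unit_norm (half_pos hε).le
    fun d hd => ?_).trans_lt (half_lt_self hε)
  rw [sub_apply, ContinuousLinearMap.comp_apply, Real.norm_eq_abs, abs_sub_comm]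
  refine le_of_tendsto
    ((((ψ.continuous.tendsto d).comp (hD.tendsto_projFinset hnorm hunc d)).sub_const
      (ψ (hD.projFinset hnorm hunc G d))).abs) (eventually_atTop.mpr ⟨G, fun H hGH => ?_⟩)
  set u := ∑ γ ∈ H \ G, ‖ι d γ‖ • e γ
  have hu : ‖u‖ ≤ 1 := ((hunc.norm_sum_le_of_subset _ Finset.sdiff_subset).trans
    (hD.norm_sum_le hunc d H)).trans hd.le
  calc _ ≤ ∑ γ ∈ H \ G, ‖ψ ∘L hD.single hnorm γ‖ * ‖ι d γ‖ :=
        hD.abs_apply_projFinset_sub_le hnorm hunc ψ d hGH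
    _ = ξ u := by simp [u, hξ, mul_comm]
    _ ≤ ε / 2 := (le_abs_self _).trans (hF u hu fun γ hγ => by simp [u, hbasis.coeff_sum, hFG hγ])

theorem summable_norm_bidualComponent_smul (φ : StrongDual ℝ (StrongDual ℝ D)) :
    Summable fun γ => ‖hD.bidualComponent hnorm hunc φ γ‖ • e γ :=
  summable_smul_of_sum_abs_le hrefl hnorm hunc hbasis _ (C := ‖φ‖) fun ξ T =>
    (Finset.sum_congr rfl fun γ _ => by
      rw [abs_mul, abs_of_nonneg (norm_nonneg (hD.bidualComponent hnorm hunc φ γ)),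
        mul_comm]).trans_le
      (hD.sum_abs_mul_norm_bidualComponent_le hnorm hunc φ ξ T)

theorem abs_apply_sub_apply_comp_projFinset_le (φ : StrongDual ℝ (StrongDual ℝ D)) {w : E}
    (hw : HasSum (fun γ => ‖hD.bidualComponent hnorm hunc φ γ‖ • e γ) w) (ψ : StrongDual ℝ D)
    (F : Finset Γ) :
    |φ ψ - φ (ψ ∘L hD.projFinset hnorm hunc F)| ≤
      ‖ψ‖ * ‖w - ∑ γ ∈ F, ‖hD.bidualComponent hnorm hunc φ γ‖ • e γ‖ := by
  set c : Γ → ℝ := fun γ => ‖hD.bidualComponent hnorm hunc φ γ‖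
  refine le_of_tendsto ((((φ.continuous.tendsto ψ).comp
    (hD.tendsto_comp_projFinset hnorm hunc hbasis hrefl ψ)).sub_const
    (φ (ψ ∘L hD.projFinset hnorm hunc F))).abs) (eventually_atTop.mpr ⟨F, fun G hFG => ?_⟩)
  calc _ = |∑ γ ∈ G \ F, hD.bidualComponent hnorm hunc φ γ (ψ ∘L hD.single hnorm γ)| := by
        simp only [Function.comp_apply, hD.comp_projFinset, map_sum,
          ← Finset.sum_sdiff_eq_sub hFG, bidualComponent_apply]
    _ ≤ ∑ γ ∈ G \ F, |c γ| * ‖ψ ∘L hD.single hnorm γ‖ :=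
        (Finset.abs_sum_le_sum_abs _ _).trans (Finset.sum_le_sum fun γ _ => by
          rw [abs_of_nonneg (norm_nonneg (hD.bidualComponent hnorm hunc φ γ))]
          exact (hD.bidualComponent hnorm hunc φ γ).le_opNorm _)
    _ ≤ ‖ψ‖ * ‖∑ γ ∈ G \ F, c γ • e γ‖ := hD.sum_abs_mul_norm_comp_single_le hnorm hunc ψ _ c
    _ ≤ ‖ψ‖ * ‖w - ∑ γ ∈ F, c γ • e γ‖ := by
        gcongr
        calc ‖∑ γ ∈ G \ F, c γ • e γ‖ = ‖∑ γ ∈ G \ F, (if γ ∈ F then 0 else c γ) • e γ‖ := by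
              congr 1
              exact Finset.sum_congr rfl fun γ hγ => by rw [if_neg (Finset.mem_sdiff.mp hγ).2]
          _ ≤ _ := hunc.norm_sum_le_of_hasSum (hw.ite_notMem_smul F) (G \ F)

theorem isGrothendieck [CompleteSpace D] (hX : ∀ γ, IsGrothendieck (X γ)) : IsGrothendieck D := by
  refine isGrothendieck_of_tendsto_zero fun h hh φ => ?_
  obtain ⟨M, hM⟩ := banach_steinhaus fun d => by
    obtain ⟨C, hC⟩ := (hh d).norm.bddAbove_range
    exact ⟨C, fun n => hC ⟨n, rfl⟩⟩
  obtain ⟨w, hw⟩ := hD.summable_norm_bidualComponent_smul hnorm hunc hbasis hrefl φ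
  have htail : Tendsto (fun F => M * ‖w - ∑ γ ∈ F, ‖hD.bidualComponent hnorm hunc φ γ‖ • e γ‖)
      atTop (𝓝 0) := by
    simpa using ((tendsto_const_nhds (x := w)).sub hw).norm.const_mul M
  refine tendsto_zero_of_forall_abs_sub_le fun ε hε => ?_
  obtain ⟨F, hF⟩ := (htail.eventually (ge_mem_nhds hε)).exists
  refine ⟨fun n => φ (h n ∘L hD.projFinset hnorm hunc F), ?_, fun n => ?_⟩
  · simpa [hD.comp_projFinset] using tendsto_finsetSum F fun γ _ =>
      hX γ (fun n => h n ∘L hD.single hnorm γ) 0 (fun x => by simpa using hh (hD.single hnorm γ x))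
        (hD.bidualComponent hnorm hunc φ γ)
  · exact (hD.abs_apply_sub_apply_comp_projFinset_le hnorm hunc hbasis hrefl φ hw (h n) F).trans
      ((mul_le_mul_of_nonneg_right (hM n) (norm_nonneg _)).trans hF)

end IsEDirectSum

end EDirectSum

theorem grothendieck_Esum_iff_general (Γ : Type*) (E : Type*)
    [NormedAddCommGroup E] [NormedSpace ℝ E]
    (e : Γ → E)
    -- `E` is reflexive
    (hrefl : Function.Surjective (NormedSpace.inclusionInDoubleDual ℝ E))
    -- `(e γ)` is normalized
    (hnorm : ∀ γ, ‖e γ‖ = 1)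
    -- `(e γ)` is an (unconditional) basis: unique unconditional expansions
    (hbasis : ∀ v : E, ∃! a : Γ → ℝ, HasSum (fun γ => a γ • e γ) v)
    -- 1-unconditionality: changing signs of coefficients does not change the norm
    (hunc : ∀ (a ε : Γ → ℝ) (v w : E), (∀ γ, |ε γ| = 1) →
      HasSum (fun γ => a γ • e γ) v → HasSum (fun γ => (ε γ * a γ) • e γ) w → ‖w‖ = ‖v‖)
    (X : Γ → Type*) [∀ γ, NormedAddCommGroup (X γ)] [∀ γ, NormedSpace ℝ (X γ)]
    (D : Type*) [NormedAddCommGroup D] [NormedSpace ℝ D] [CompleteSpace D]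
    (ι : D →ₗ[ℝ] (∀ γ, X γ))
    (hinj : Function.Injective ι)
    (hmem : ∀ d : D, Summable fun γ => ‖ι d γ‖ • e γ)
    (hsurj : ∀ x : ∀ γ, X γ, (Summable fun γ => ‖x γ‖ • e γ) → ∃ d : D, ι d = x)
    (hnormD : ∀ d : D, ‖d‖ = ‖∑' γ, ‖ι d γ‖ • e γ‖) :
    IsGrothendieck D ↔ ∀ γ, IsGrothendieck (X γ) := by
  have hD : IsEDirectSum e ι := ⟨hinj, hmem, hsurj, hnormD⟩
  exact ⟨fun hDG γ => hDG.of_retract _ _ (hD.proj_single hnorm hunc γ),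
    hD.isGrothendieck hnorm hunc hbasis hrefl⟩

/-- Let `E` be a reflexive Banach space with a normalized 1-unconditional basis
`(e γ)`, let `(X γ)` be a family of Banach spaces, and let `D` be a Banach space
realizing the `E`-direct sum `(⊕ γ, X γ)_E`, i.e. `ι : D →ₗ (Π γ, X γ)` identifies `D`
with the tuples `(x γ)` such that `∑ γ, ‖x γ‖ • e γ` converges in `E`, with
`‖d‖ = ‖∑' γ, ‖ι d γ‖ • e γ‖`. Then `D` is Grothendieck iff each `X γ` is. -/
theorem grothendieck_Esum_iff (Γ : Type*) (E : Type*)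
    [NormedAddCommGroup E] [NormedSpace ℝ E] [CompleteSpace E]
    (e : Γ → E)
    -- `E` is reflexive
    (hrefl : Function.Surjective (NormedSpace.inclusionInDoubleDual ℝ E))
    -- `(e γ)` is normalized
    (hnorm : ∀ γ, ‖e γ‖ = 1)
    -- `(e γ)` is an (unconditional) basis: unique unconditional expansions
    (hbasis : ∀ v : E, ∃! a : Γ → ℝ, HasSum (fun γ => a γ • e γ) v)
    -- 1-unconditionality: changing signs of coefficients does not change the norm
    (hunc : ∀ (a ε : Γ → ℝ) (v w : E), (∀ γ, |ε γ| = 1) →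
      HasSum (fun γ => a γ • e γ) v → HasSum (fun γ => (ε γ * a γ) • e γ) w → ‖w‖ = ‖v‖)
    (X : Γ → Type*) [∀ γ, NormedAddCommGroup (X γ)] [∀ γ, NormedSpace ℝ (X γ)]
    [∀ γ, CompleteSpace (X γ)]
    (D : Type*) [NormedAddCommGroup D] [NormedSpace ℝ D] [CompleteSpace D]
    (ι : D →ₗ[ℝ] (∀ γ, X γ))
    (hinj : Function.Injective ι)
    (hmem : ∀ d : D, Summable fun γ => ‖ι d γ‖ • e γ)
    (hsurj : ∀ x : ∀ γ, X γ, (Summable fun γ => ‖x γ‖ • e γ) → ∃ d : D, ι d = x)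
    (hnormD : ∀ d : D, ‖d‖ = ‖∑' γ, ‖ι d γ‖ • e γ‖) :
    IsGrothendieck D ↔ ∀ γ, IsGrothendieck (X γ) :=
  grothendieck_Esum_iff_general Γ E e hrefl hnorm hbasis hunc X D ι hinj hmem hsurj hnormD
end
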